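/- arXiv:1908.07984 — 10 statements merged into one kernel-verified Lean document; each statement's English description precedes it below -/
import Mathlib

section
/- Let z₁,…,z_n be nonpositive reals, η₁,…,η_n reals with all |η_i| equal and nonzero, and let R(z) = α + βz where (α,β) minimizes max_i |η_i (1 + (z_i − 1)(α' + β' z_i))| over (α',β') ∈ ℝ². Then for every i, 0 < R(z_i) < 2/(1 − z_i). -/
/-- Maximum-norm stability of the minimal residual Euler method: if all
`z i ≤ 0`, all `|η i|` are equal and nonzero, at least two `z i` are distinct,
and `(α, β)` minimizes `max_i |η i * (1 + (z i − 1)(α' + β' z i))|`, then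
`0 < R(z i) < 2/(1 − z i)` for every `i`, where `R(z) = α + β z`. -/
theorem mre_maxnorm_stability (n : ℕ) [NeZero n] (z η : Fin n → ℝ)
    (hz : ∀ i, z i ≤ 0)
    (hηeq : ∀ i j, |η i| = |η j|) (hη0 : ∀ i, η i ≠ 0)
    (hdist : ∃ i j, z i ≠ z j)
    (α β : ℝ)
    (hmin : ∀ a b : ℝ,
      (Finset.univ.sup' Finset.univ_nonempty
        fun i => |η i * (1 + (z i - 1) * (α + β * z i))|) ≤
      Finset.univ.sup' Finset.univ_nonempty
        fun i => |η i * (1 + (z i - 1) * (a + b * z i))|) :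
    ∀ i, 0 < α + β * z i ∧ α + β * z i < 2 / (1 - z i) := by
  -- the minimum of z
  set m : ℝ := Finset.univ.inf' Finset.univ_nonempty z with hm
  have hmz : ∀ i, m ≤ z i := fun i => Finset.inf'_le _ (Finset.mem_univ i)
  have hm0 : m ≤ 0 := by
    obtain ⟨i⟩ := (inferInstance : Nonempty (Fin n))
    exact le_trans (hmz i) (hz i)
  have h1m : (0:ℝ) < 1 - m := by linarith
  set t : ℝ := 1 / (1 - m) with ht
  have ht0 : 0 < t := by positivity
  have ht1 : t ≤ 1 := by
    rw [ht, div_le_one h1m]; linarith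
  -- key: the residual is strictly below 1 in absolute value at every node
  have key : ∀ i, |1 + (z i - 1) * (α + β * z i)| < 1 := by
    intro i
    have hc : 0 < |η i| := abs_pos.mpr (hη0 i)
    have h1 : |η i * (1 + (z i - 1) * (α + β * z i))| ≤
        Finset.univ.sup' Finset.univ_nonempty
          fun j => |η j * (1 + (z j - 1) * (α + β * z j))| :=
      Finset.le_sup' (fun j => |η j * (1 + (z j - 1) * (α + β * z j))|) (Finset.mem_univ i)
    have h2 := hmin t 0
    have h3 : (Finset.univ.sup' Finset.univ_nonempty
        fun j => |η j * (1 + (z j - 1) * (t + 0 * z j))|) ≤ |η i| * (1 - t) := by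
      apply Finset.sup'_le
      intro j _
      have hXj : 1 + (z j - 1) * (t + 0 * z j) = 1 + t * (z j - 1) := by ring
      have hlow : 0 ≤ 1 + t * (z j - 1) := by
        have h := hmz j
        have : t * (m - 1) = -1 := by
          rw [ht]; field_simp; ring
        nlinarith [mul_le_mul_of_nonneg_left (by linarith : m - 1 ≤ z j - 1) ht0.le]
      have hhigh : 1 + t * (z j - 1) ≤ 1 - t := by
        nlinarith [mul_le_mul_of_nonneg_left (by linarith [hz j] : z j - 1 ≤ -1) ht0.le]
      rw [abs_mul, hXj, abs_of_nonneg hlow, hηeq j i]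
      exact mul_le_mul_of_nonneg_left hhigh (abs_nonneg _)
    have h4 : |η i| * |1 + (z i - 1) * (α + β * z i)| ≤ |η i| * (1 - t) := by
      rw [← abs_mul]
      exact le_trans h1 (le_trans h2 h3)
    have h5 : |1 + (z i - 1) * (α + β * z i)| ≤ 1 - t :=
      le_of_mul_le_mul_left h4 hc
    linarith
  intro i
  obtain ⟨hE1, hE2⟩ := abs_lt.mp (key i)
  have h1z : (0:ℝ) < 1 - z i := by linarith [hz i]
  constructor
  · by_contra h
    push_neg at h
    have : 0 ≤ (z i - 1) * (α + β * z i) := by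
      nlinarith
    linarith
  · rw [lt_div_iff₀ h1z]
    nlinarith
end

section
/- Let W be the n×2 real matrix with rows (η_i(z_i − 1), η_i z_i(z_i − 1)) for i = 1,…,n. The columns of W are linearly independent if and only if there exist indices i ≠ j such that z_i ≠ z_j, z_i ≠ 1, z_j ≠ 1, and η_i η_j ≠ 0. -/
/-- Well-posedness of the MRE least-squares problem: the two columns of the
`n × 2` matrix with rows `(η i (z i − 1), η i z i (z i − 1))` are linearly
independent iff there are indices `i ≠ j` with `z i ≠ z j`, `z i ≠ 1`,
`z j ≠ 1` and `η i * η j ≠ 0`. -/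
theorem mre_ls_well_posed_iff (n : ℕ) (z η : Fin n → ℝ) :
    LinearIndependent ℝ
      ![fun i => η i * (z i - 1), fun i => η i * z i * (z i - 1)] ↔
    ∃ i j, i ≠ j ∧ z i ≠ z j ∧ z i ≠ 1 ∧ z j ≠ 1 ∧ η i * η j ≠ 0 := by
  rw [LinearIndependent.pair_iff]
  constructor
  · intro h
    by_contra hc
    push_neg at hc
    by_cases he : ∃ i, η i ≠ 0 ∧ z i ≠ 1
    · obtain ⟨i₀, hη₀, hz₀⟩ := he
      have key : ∀ k, η k * z k * (z k - 1) = z i₀ * (η k * (z k - 1)) := by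
        intro k
        by_cases hk : η k = 0
        · simp [hk]
        by_cases hk1 : z k = 1
        · simp [hk1]
        by_cases hki : k = i₀
        · subst hki; ring
        have hzz : z k = z i₀ := by
          by_contra hzz
          exact (mul_ne_zero hk hη₀) (hc k i₀ hki hzz hk1 hz₀)
        rw [hzz]; ring
      have h2 := h (z i₀) (-1) (by
        funext k
        simp only [Pi.add_apply, Pi.smul_apply, smul_eq_mul, Pi.zero_apply]
        rw [key k]; ring)
      exact one_ne_zero (neg_eq_zero.mp h2.2)
    · push_neg at he
      have h2 := h 1 0 (by
        funext k
        have hk0 : η k * (z k - 1) = 0 := by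
          by_cases hk : η k = 0
          · simp [hk]
          · simp [he k hk]
        simp only [Pi.add_apply, Pi.smul_apply, smul_eq_mul, Pi.zero_apply]
        rw [hk0]; ring)
      exact one_ne_zero h2.1
  · rintro ⟨i, j, hij, hzz, hzi, hzj, hη⟩ s t hst
    obtain ⟨hηi, hηj⟩ := mul_ne_zero_iff.mp hη
    have hi := congrFun hst i
    have hj := congrFun hst j
    simp only [Pi.add_apply, Pi.smul_apply, smul_eq_mul, Pi.zero_apply] at hi hj
    have hi' : (s + t * z i) * (η i * (z i - 1)) = 0 := by linarith [hi]
    have hj' : (s + t * z j) * (η j * (z j - 1)) = 0 := by linarith [hj]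
    have hfi : s + t * z i = 0 := by
      rcases mul_eq_zero.mp hi' with h' | h'
      · exact h'
      · rcases mul_eq_zero.mp h' with h'' | h''
        · exact absurd h'' hηi
        · exact absurd (by linarith : z i = 1) hzi
    have hfj : s + t * z j = 0 := by
      rcases mul_eq_zero.mp hj' with h' | h'
      · exact h'
      · rcases mul_eq_zero.mp h' with h'' | h''
        · exact absurd h'' hηj
        · exact absurd (by linarith : z j = 1) hzj
    have ht : t = 0 := by
      have : t * (z i - z j) = 0 := by linarith
      rcases mul_eq_zero.mp this with h' | h'
      · exact h'
      · exact absurd (by linarith : z i = z j) hzz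
    constructor
    · rw [ht] at hfi; linarith
    · exact ht
end

section
/- Let s_i = 1 − z_i and consider the 2×2 linear system [[∑η_i²s_i², ∑η_i²s_i²z_i],[∑η_i²s_i²z_i, ∑η_i²s_i²z_i²]]·(α,β)ᵀ = (∑η_i²s_i, ∑η_i²s_i z_i)ᵀ (the normal equations of the MRE least-squares problem). If all z_i ≤ 0 and the system matrix is nonsingular (which holds when there exist i ≠ j with z_i ≠ z_j and η_iη_j ≠ 0), then the solution satisfies 0 ≤ β ≤ α ≤ 1. -/
open Finset in
/-- Symmetrization lemma: a difference of products of sums is nonnegative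
provided each symmetrized pair term is nonnegative. -/
lemma mre_sym_key (n : ℕ) (a b c d : Fin n → ℝ)
    (h : ∀ i j, 0 ≤ a i * d j + a j * d i - b i * c j - b j * c i) :
    0 ≤ (∑ i, a i) * (∑ i, d i) - (∑ i, b i) * (∑ i, c i) := by
  have e1 : (∑ i, a i) * (∑ i, d i) = ∑ i, ∑ j, a i * d j :=
    Fintype.sum_mul_sum a d
  have e1' : (∑ i, a i) * (∑ i, d i) = ∑ i, ∑ j, a j * d i := by
    rw [Fintype.sum_mul_sum a d, Finset.sum_comm]
  have e2 : (∑ i, b i) * (∑ i, c i) = ∑ i, ∑ j, b i * c j :=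
    Fintype.sum_mul_sum b c
  have e2' : (∑ i, b i) * (∑ i, c i) = ∑ i, ∑ j, b j * c i := by
    rw [Fintype.sum_mul_sum b c, Finset.sum_comm]
  have h2 : 2 * ((∑ i, a i) * (∑ i, d i) - (∑ i, b i) * (∑ i, c i))
      = ∑ i, ∑ j, (a i * d j + a j * d i - b i * c j - b j * c i) := by
    simp only [Finset.sum_add_distrib, Finset.sum_sub_distrib]
    rw [← e1, ← e1', ← e2, ← e2']; ring
  have h3 : 0 ≤ ∑ i : Fin n, ∑ j : Fin n,
      (a i * d j + a j * d i - b i * c j - b j * c i) :=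
    Finset.sum_nonneg fun i _ => Finset.sum_nonneg fun j _ => h i j
  linarith

open Finset in
/-- Positivity lemma for the MRE coefficients: if all `z i ≤ 0`, `sᵢ = 1 − zᵢ`,
the normal-equations matrix is nonsingular, and `(α, β)` solves the normal
equations of the MRE least-squares problem, then `0 ≤ β ≤ α ≤ 1`. -/
theorem mre_coefficients_positivity (n : ℕ) (z η : Fin n → ℝ)
    (hz : ∀ i, z i ≤ 0) (s : Fin n → ℝ) (hs : ∀ i, s i = 1 - z i)
    (α β : ℝ)
    (hdet : (∑ i, (η i) ^ 2 * (s i) ^ 2) * (∑ i, (η i) ^ 2 * (s i) ^ 2 * (z i) ^ 2)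
        - (∑ i, (η i) ^ 2 * (s i) ^ 2 * z i) ^ 2 ≠ 0)
    (heq1 : (∑ i, (η i) ^ 2 * (s i) ^ 2) * α
        + (∑ i, (η i) ^ 2 * (s i) ^ 2 * z i) * β = ∑ i, (η i) ^ 2 * s i)
    (heq2 : (∑ i, (η i) ^ 2 * (s i) ^ 2 * z i) * α
        + (∑ i, (η i) ^ 2 * (s i) ^ 2 * (z i) ^ 2) * β = ∑ i, (η i) ^ 2 * s i * z i) :
    0 ≤ β ∧ β ≤ α ∧ α ≤ 1 := by
  simp only [hs] at hdet heq1 heq2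
  have hz1 : ∀ i, (0:ℝ) < 1 - z i := fun i => by linarith [hz i]
  set A := ∑ i, (η i) ^ 2 * (1 - z i) ^ 2 with hA
  set B := ∑ i, (η i) ^ 2 * (1 - z i) ^ 2 * z i with hB
  set C := ∑ i, (η i) ^ 2 * (1 - z i) ^ 2 * (z i) ^ 2 with hC
  set b1 := ∑ i, (η i) ^ 2 * (1 - z i) with hb1
  set b2 := ∑ i, (η i) ^ 2 * (1 - z i) * z i with hb2
  set E := ∑ i, (η i) ^ 2 * (1 - z i) * (z i) ^ 2 with hE
  -- determinant nonnegative, hence positive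
  have hD0 : 0 ≤ A * C - B * B := by
    apply mre_sym_key n (fun i => (η i) ^ 2 * (1 - z i) ^ 2)
      (fun i => (η i) ^ 2 * (1 - z i) ^ 2 * z i)
      (fun i => (η i) ^ 2 * (1 - z i) ^ 2 * z i)
      (fun i => (η i) ^ 2 * (1 - z i) ^ 2 * (z i) ^ 2)
    intro i j
    have key : (η i) ^ 2 * (1 - z i) ^ 2 * ((η j) ^ 2 * (1 - z j) ^ 2 * (z j) ^ 2)
        + (η j) ^ 2 * (1 - z j) ^ 2 * ((η i) ^ 2 * (1 - z i) ^ 2 * (z i) ^ 2)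
        - (η i) ^ 2 * (1 - z i) ^ 2 * z i * ((η j) ^ 2 * (1 - z j) ^ 2 * z j)
        - (η j) ^ 2 * (1 - z j) ^ 2 * z j * ((η i) ^ 2 * (1 - z i) ^ 2 * z i)
        = (η i * η j * (1 - z i) * (1 - z j)) ^ 2 * (z i - z j) ^ 2 := by ring
    rw [key]; positivity
  have hDpos : 0 < A * C - B ^ 2 := by
    rcases lt_or_eq_of_le hD0 with h | h
    · nlinarith
    · exfalso; apply hdet; nlinarith
  -- β * D ≥ 0
  have hβD : 0 ≤ A * b2 - B * b1 := by
    apply mre_sym_key n (fun i => (η i) ^ 2 * (1 - z i) ^ 2)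
      (fun i => (η i) ^ 2 * (1 - z i) ^ 2 * z i)
      (fun i => (η i) ^ 2 * (1 - z i))
      (fun i => (η i) ^ 2 * (1 - z i) * z i)
    intro i j
    have key : (η i) ^ 2 * (1 - z i) ^ 2 * ((η j) ^ 2 * (1 - z j) * z j)
        + (η j) ^ 2 * (1 - z j) ^ 2 * ((η i) ^ 2 * (1 - z i) * z i)
        - (η i) ^ 2 * (1 - z i) ^ 2 * z i * ((η j) ^ 2 * (1 - z j))
        - (η j) ^ 2 * (1 - z j) ^ 2 * z j * ((η i) ^ 2 * (1 - z i))
        = (η i * η j) ^ 2 * (1 - z i) * (1 - z j) * (z i - z j) ^ 2 := by ring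
    rw [key]
    have := hz1 i; have := hz1 j; positivity
  -- (α - β) * D ≥ 0
  have hαβD : 0 ≤ (B + C) * b1 - (A + B) * b2 := by
    have h1 : B + C = ∑ i, (η i) ^ 2 * (1 - z i) ^ 2 * ((z i) + (z i) ^ 2) := by
      rw [hB, hC, ← Finset.sum_add_distrib]
      exact Finset.sum_congr rfl fun i _ => by ring
    have h2 : A + B = ∑ i, (η i) ^ 2 * (1 - z i) ^ 2 * (1 + z i) := by
      rw [hA, hB, ← Finset.sum_add_distrib]
      exact Finset.sum_congr rfl fun i _ => by ring
    rw [h1, h2]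
    apply mre_sym_key n (fun i => (η i) ^ 2 * (1 - z i) ^ 2 * ((z i) + (z i) ^ 2))
      (fun i => (η i) ^ 2 * (1 - z i) ^ 2 * (1 + z i))
      (fun i => (η i) ^ 2 * (1 - z i) * z i)
      (fun i => (η i) ^ 2 * (1 - z i))
    intro i j
    have key : (η i) ^ 2 * (1 - z i) ^ 2 * ((z i) + (z i) ^ 2) * ((η j) ^ 2 * (1 - z j))
        + (η j) ^ 2 * (1 - z j) ^ 2 * ((z j) + (z j) ^ 2) * ((η i) ^ 2 * (1 - z i))
        - (η i) ^ 2 * (1 - z i) ^ 2 * (1 + z i) * ((η j) ^ 2 * (1 - z j) * z j)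
        - (η j) ^ 2 * (1 - z j) ^ 2 * (1 + z j) * ((η i) ^ 2 * (1 - z i) * z i)
        = (η i * η j) ^ 2 * (1 - z i) * (1 - z j) * (z i - z j) ^ 2
          * (-(z i + z j)) := by ring
    rw [key]
    have h1i := hz1 i; have h1j := hz1 j
    have h2ij : (0:ℝ) ≤ -(z i + z j) := by linarith [hz i, hz j]
    positivity
  -- (1 - α) * D ≥ 0
  have h1αD : 0 ≤ B * E - C * b2 := by
    apply mre_sym_key n (fun i => (η i) ^ 2 * (1 - z i) ^ 2 * z i)
      (fun i => (η i) ^ 2 * (1 - z i) ^ 2 * (z i) ^ 2)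
      (fun i => (η i) ^ 2 * (1 - z i) * z i)
      (fun i => (η i) ^ 2 * (1 - z i) * (z i) ^ 2)
    intro i j
    have key : (η i) ^ 2 * (1 - z i) ^ 2 * z i * ((η j) ^ 2 * (1 - z j) * (z j) ^ 2)
        + (η j) ^ 2 * (1 - z j) ^ 2 * z j * ((η i) ^ 2 * (1 - z i) * (z i) ^ 2)
        - (η i) ^ 2 * (1 - z i) ^ 2 * (z i) ^ 2 * ((η j) ^ 2 * (1 - z j) * z j)
        - (η j) ^ 2 * (1 - z j) ^ 2 * (z j) ^ 2 * ((η i) ^ 2 * (1 - z i) * z i)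
        = (η i * η j) ^ 2 * (1 - z i) * (1 - z j) * (z i * z j) * (z i - z j) ^ 2 := by
      ring
    rw [key]
    have h1i := hz1 i; have h1j := hz1 j
    have hzz : (0:ℝ) ≤ z i * z j := by nlinarith [hz i, hz j]
    positivity
  -- algebraic identities from the normal equations
  have hβeq : β * (A * C - B ^ 2) = A * b2 - B * b1 := by
    linear_combination A * heq2 - B * heq1
  have hαeq : α * (A * C - B ^ 2) = C * b1 - B * b2 := by
    linear_combination C * heq1 - B * heq2
  have hAeq : A = b1 - b2 := by
    rw [hA, hb1, hb2, ← Finset.sum_sub_distrib]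
    exact Finset.sum_congr rfl fun i _ => by ring
  have hBeq : B = b2 - E := by
    rw [hB, hb2, hE, ← Finset.sum_sub_distrib]
    exact Finset.sum_congr rfl fun i _ => by ring
  have h1αeq : (1 - α) * (A * C - B ^ 2) = B * E - C * b2 := by
    linear_combination (-1 : ℝ) * hαeq + C * hAeq - B * hBeq
  have hαβeq : (α - β) * (A * C - B ^ 2) = (B + C) * b1 - (A + B) * b2 := by
    linear_combination hαeq - hβeq
  have hβ0 : 0 ≤ β := by
    have h : 0 ≤ β * (A * C - B ^ 2) := by rw [hβeq]; exact hβD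
    exact (mul_nonneg_iff_of_pos_right hDpos).mp h
  have hβα : β ≤ α := by
    have h : 0 ≤ (α - β) * (A * C - B ^ 2) := by rw [hαβeq]; exact hαβD
    have := (mul_nonneg_iff_of_pos_right hDpos).mp h
    linarith
  have hα1 : α ≤ 1 := by
    have h : 0 ≤ (1 - α) * (A * C - B ^ 2) := by rw [h1αeq]; exact h1αD
    have := (mul_nonneg_iff_of_pos_right hDpos).mp h
    linarith
  exact ⟨hβ0, hβα, hα1⟩
end

section
/- If z_i ≤ 0 for all i (so s_i = 1 − z_i ≥ 1), then 0 ≤ δ₂ⁿ⁻¹ ≤ δ₁ⁿ⁻¹ ≤ δⁿ⁻¹, where δⁿ⁻¹ = η_n²s_n² ∑_{i<n} η_i²s_i²(z_i − z_n)², δ₁ⁿ⁻¹ = η_n²s_n ∑_{i<n} η_i²(z_i − z_n)²(1 − z_i − z_n), δ₂ⁿ⁻¹ = η_n²s_n ∑_{i<n} η_i²s_i(z_i − z_n)². -/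
open Finset in
/-- If all `z i ≤ 0` (so `sᵢ = 1 − zᵢ ≥ 1`), then the increments of the Cramer
determinants satisfy `0 ≤ δ₂ ≤ δ₁ ≤ δ` (indices `0, …, n` play the role of
`1, …, n+1` in the paper). -/
theorem mre_delta_increments_chain (n : ℕ) (z η : ℕ → ℝ)
    (hz : ∀ i ≤ n, z i ≤ 0) (s : ℕ → ℝ) (hs : ∀ i, s i = 1 - z i) :
    0 ≤ (η n) ^ 2 * s n * ∑ i ∈ range n, (η i) ^ 2 * s i * (z i - z n) ^ 2 ∧
    (η n) ^ 2 * s n * ∑ i ∈ range n, (η i) ^ 2 * s i * (z i - z n) ^ 2 ≤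
      (η n) ^ 2 * s n * ∑ i ∈ range n, (η i) ^ 2 * (z i - z n) ^ 2 * (1 - z i - z n) ∧
    (η n) ^ 2 * s n * ∑ i ∈ range n, (η i) ^ 2 * (z i - z n) ^ 2 * (1 - z i - z n) ≤
      (η n) ^ 2 * (s n) ^ 2 * ∑ i ∈ range n, (η i) ^ 2 * (s i) ^ 2 * (z i - z n) ^ 2 := by
  have hsn : 1 ≤ s n := by rw [hs]; linarith [hz n le_rfl]
  have hsi : ∀ i ≤ n, 1 ≤ s i := fun i hi => by rw [hs]; linarith [hz i hi]
  have hzn := hz n le_rfl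
  refine ⟨?_, ?_, ?_⟩
  · apply mul_nonneg (by positivity)
    apply Finset.sum_nonneg
    intro i hi
    have := hsi i (le_of_lt (Finset.mem_range.mp hi))
    positivity
  · apply mul_le_mul_of_nonneg_left _ (by positivity)
    apply Finset.sum_le_sum
    intro i hi
    have h1 := hsi i (le_of_lt (Finset.mem_range.mp hi))
    have h2 := hz i (le_of_lt (Finset.mem_range.mp hi))
    rw [hs]
    nlinarith [mul_nonneg (mul_nonneg (sq_nonneg (η i)) (sq_nonneg (z i - z n))) (neg_nonneg.mpr hzn)]
  · have key : ∀ i ∈ Finset.range n,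
        (η i) ^ 2 * (z i - z n) ^ 2 * (1 - z i - z n) ≤
        s n * ((η i) ^ 2 * (s i) ^ 2 * (z i - z n) ^ 2) := by
      intro i hi
      have h1 := hsi i (le_of_lt (Finset.mem_range.mp hi))
      have h2 := hz i (le_of_lt (Finset.mem_range.mp hi))
      have h3 : s n * (s i) ^ 2 ≥ 1 - z i - z n := by
        rw [hs, hs]
        nlinarith [mul_nonneg (neg_nonneg.mpr hzn) (neg_nonneg.mpr h2), sq_nonneg (z i), mul_nonneg (mul_nonneg (neg_nonneg.mpr hzn) (neg_nonneg.mpr h2)) (neg_nonneg.mpr h2)]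
      nlinarith [sq_nonneg (η i), sq_nonneg (z i - z n), mul_nonneg (sq_nonneg (η i)) (sq_nonneg (z i - z n))]
    calc (η n) ^ 2 * s n * ∑ i ∈ Finset.range n, (η i) ^ 2 * (z i - z n) ^ 2 * (1 - z i - z n)
        ≤ (η n) ^ 2 * s n * ∑ i ∈ Finset.range n, s n * ((η i) ^ 2 * (s i) ^ 2 * (z i - z n) ^ 2) := by
          apply mul_le_mul_of_nonneg_left (Finset.sum_le_sum key) (by positivity)
      _ = (η n) ^ 2 * (s n) ^ 2 * ∑ i ∈ Finset.range n, (η i) ^ 2 * (s i) ^ 2 * (z i - z n) ^ 2 := by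
          rw [← Finset.mul_sum]; ring
end

section
/- Suppose all |η_i| are equal and nonzero, all z_i ≤ 0 with z_n = min_i z_i, and (α, β) solves the 2-norm MRE minimization. If R(z_n) = α + β z_n < −1, then B_n(z_n) < 0, where B_n(z) = (2 − z)(z² − 8z + 8) − √n · z². -/
open Finset Real in
/-- If all `|η i|` are equal and nonzero, all `z i ≤ 0`, `zₙ = minᵢ z i`, and
`(α, β)` minimizes the 2-norm MRE objective
`∑ᵢ η i² (1 + (z i − 1)(α' + β' z i))²`, then `R(zₙ) = α + β zₙ < −1` implies
`Bₙ(zₙ) = (2 − zₙ)(zₙ² − 8 zₙ + 8) − √n · zₙ² < 0`. -/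
theorem mre_instability_implies_B_neg (n : ℕ) (z η : Fin n → ℝ)
    (hz : ∀ i, z i ≤ 0)
    (hηeq : ∀ i j, |η i| = |η j|) (hη0 : ∀ i, η i ≠ 0)
    (zn : ℝ) (i₀ : Fin n) (hzn : z i₀ = zn) (hmin' : ∀ i, zn ≤ z i)
    (α β : ℝ)
    (hmin : ∀ a b : ℝ,
      (∑ i, (η i) ^ 2 * (1 + (z i - 1) * (α + β * z i)) ^ 2) ≤
      ∑ i, (η i) ^ 2 * (1 + (z i - 1) * (a + b * z i)) ^ 2)
    (hR : α + β * zn < -1) :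
    (2 - zn) * (zn ^ 2 - 8 * zn + 8) - Real.sqrt n * zn ^ 2 < 0 := by
  have hm : zn ≤ 0 := hzn ▸ hz i₀
  set D : ℝ := zn ^ 2 - 8 * zn + 8 with hDdef
  have hD : (0:ℝ) < D := by nlinarith [sq_nonneg zn]
  have hDne : D ≠ 0 := ne_of_gt hD
  have hc : (0:ℝ) < (η i₀) ^ 2 := by
    have := hη0 i₀; positivity
  -- upper bound using the Chebyshev polynomial coefficients
  have hub : ∑ i, (η i) ^ 2 * (1 + (z i - 1) * ((8 - 8*zn)/D + (8/D) * z i)) ^ 2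
      ≤ (n : ℝ) * ((η i₀) ^ 2 * (zn ^ 2 / D) ^ 2) := by
    have hstep : ∀ i ∈ Finset.univ (α := Fin n),
        (η i) ^ 2 * (1 + (z i - 1) * ((8 - 8*zn)/D + (8/D) * z i)) ^ 2
          ≤ (η i₀) ^ 2 * (zn ^ 2 / D) ^ 2 := by
      intro i _
      have hηi : (η i) ^ 2 = (η i₀) ^ 2 := by
        rw [← sq_abs (η i), hηeq i i₀, sq_abs]
      rw [hηi]
      apply mul_le_mul_of_nonneg_left _ (le_of_lt hc)
      have heq : 1 + (z i - 1) * ((8 - 8*zn)/D + (8/D) * z i)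
          = (8 * (z i)^2 - 8 * zn * z i + zn ^ 2) / D := by
        field_simp
        ring
      rw [heq, div_pow, div_pow]
      apply div_le_div_of_nonneg_right _ (by positivity)
      have h1 : 8 * (z i)^2 - 8 * zn * z i + zn ^ 2 ≤ zn ^ 2 := by
        nlinarith [hz i, hmin' i]
      have h2 : -(zn ^ 2) ≤ 8 * (z i)^2 - 8 * zn * z i + zn ^ 2 := by
        nlinarith [sq_nonneg (2 * z i - zn)]
      nlinarith [mul_nonneg (by linarith : (0:ℝ) ≤ zn^2 - (8 * (z i)^2 - 8 * zn * z i + zn ^ 2))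
        (by linarith : (0:ℝ) ≤ zn^2 + (8 * (z i)^2 - 8 * zn * z i + zn ^ 2))]
    calc ∑ i, (η i) ^ 2 * (1 + (z i - 1) * ((8 - 8*zn)/D + (8/D) * z i)) ^ 2
        ≤ ∑ _i : Fin n, (η i₀) ^ 2 * (zn ^ 2 / D) ^ 2 := Finset.sum_le_sum hstep
      _ = (n : ℝ) * ((η i₀) ^ 2 * (zn ^ 2 / D) ^ 2) := by
          rw [Finset.sum_const, Finset.card_univ, Fintype.card_fin, nsmul_eq_mul]
  -- lower bound: the optimal objective dominates the i₀ term
  have hlb : (η i₀) ^ 2 * (1 + (zn - 1) * (α + β * zn)) ^ 2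
      ≤ ∑ i, (η i) ^ 2 * (1 + (z i - 1) * (α + β * z i)) ^ 2 := by
    have := Finset.single_le_sum
      (f := fun i => (η i) ^ 2 * (1 + (z i - 1) * (α + β * z i)) ^ 2)
      (fun i _ => by positivity) (Finset.mem_univ i₀)
    rwa [hzn] at this
  have hP : 2 - zn < 1 + (zn - 1) * (α + β * zn) := by
    nlinarith [mul_pos (by linarith : (0:ℝ) < 1 - zn) (by linarith : (0:ℝ) < -1 - (α + β * zn))]
  have hP2 : (η i₀) ^ 2 * (2 - zn) ^ 2 < (η i₀) ^ 2 * (1 + (zn - 1) * (α + β * zn)) ^ 2 := by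
    apply mul_lt_mul_of_pos_left _ hc
    nlinarith [hP, hm]
  have hchain : (η i₀) ^ 2 * (2 - zn) ^ 2 < (n : ℝ) * ((η i₀) ^ 2 * (zn ^ 2 / D) ^ 2) :=
    lt_of_lt_of_le (lt_of_lt_of_le hP2 hlb) (le_trans (hmin _ _) hub)
  have hlt : (2 - zn) ^ 2 < (n : ℝ) * (zn ^ 2 / D) ^ 2 := by
    have : (n : ℝ) * ((η i₀) ^ 2 * (zn ^ 2 / D) ^ 2)
        = (η i₀) ^ 2 * ((n : ℝ) * (zn ^ 2 / D) ^ 2) := by ring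
    rw [this] at hchain
    exact lt_of_mul_lt_mul_left hchain (le_of_lt hc)
  -- clear denominators
  have key : (2 - zn) ^ 2 * D ^ 2 < (n : ℝ) * (zn ^ 2) ^ 2 := by
    have hD2 : (0:ℝ) < D ^ 2 := by positivity
    have h := mul_lt_mul_of_pos_right hlt hD2
    rw [div_pow] at h
    calc (2 - zn) ^ 2 * D ^ 2 < (n : ℝ) * ((zn ^ 2) ^ 2 / D ^ 2) * D ^ 2 := h
      _ = (n : ℝ) * (zn ^ 2) ^ 2 := by field_simp
  have hs : (0:ℝ) ≤ Real.sqrt n := Real.sqrt_nonneg _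
  have hs2 : (Real.sqrt n) ^ 2 = (n : ℝ) := Real.sq_sqrt (Nat.cast_nonneg n)
  nlinarith [key, hs, hs2, hD, hm, mul_nonneg hs (sq_nonneg zn),
    sq_nonneg ((2 - zn) * D - Real.sqrt n * zn ^ 2),
    mul_pos (by linarith : (0:ℝ) < 2 - zn) hD]
end

section
/- For real c > 0, the polynomial B(z) = (2 − z)(z² − 8z + 8) − c z² is positive for all z ≤ 0 if and only if c < 2(5 + 3√3). In particular, with c = √n, B_n(z) > 0 for all z ≤ 0 whenever √n < 2(5 + 3√3) ≈ 20.39. -/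
open Real in
lemma B_aux_pos (c : ℝ) (hc : c < 2 * (5 + 3 * Real.sqrt 3)) :
    ∀ z : ℝ, z ≤ 0 → 0 < (2 - z) * (z ^ 2 - 8 * z + 8) - c * z ^ 2 := by
  intro z hz
  have hs : Real.sqrt 3 ^ 2 = 3 := Real.sq_sqrt (by norm_num)
  have hs0 : 0 ≤ Real.sqrt 3 := Real.sqrt_nonneg 3
  have hs1 : (1:ℝ) < Real.sqrt 3 := by nlinarith
  have hs2 : Real.sqrt 3 < 2 := by nlinarith
  rcases eq_or_lt_of_le hz with h0 | h0
  · subst h0; nlinarith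
  · have hz2 : 0 < z ^ 2 := by nlinarith
    nlinarith [sq_nonneg (z + 2 + 2 * Real.sqrt 3),
      mul_pos (sub_pos.2 hc) hz2,
      mul_nonneg (sq_nonneg (z + 2 + 2 * Real.sqrt 3)) (by nlinarith : (0:ℝ) ≤ 4 - 2 * Real.sqrt 3 - z)]

open Real in
/-- For `c > 0`, the polynomial `B(z) = (2 − z)(z² − 8z + 8) − c z²` is
positive for all `z ≤ 0` iff `c < 2(5 + 3√3)`. In particular, for `c = √n`,
`Bₙ(z) > 0` for all `z ≤ 0` whenever `√n < 2(5 + 3√3)`. -/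
theorem B_poly_pos_iff (c : ℝ) (hc : 0 < c) :
    ((∀ z : ℝ, z ≤ 0 → 0 < (2 - z) * (z ^ 2 - 8 * z + 8) - c * z ^ 2) ↔
      c < 2 * (5 + 3 * Real.sqrt 3)) ∧
    (∀ n : ℕ, 0 < n → Real.sqrt n < 2 * (5 + 3 * Real.sqrt 3) →
      ∀ z : ℝ, z ≤ 0 → 0 < (2 - z) * (z ^ 2 - 8 * z + 8) - Real.sqrt n * z ^ 2) := by
  have hs : Real.sqrt 3 ^ 2 = 3 := Real.sq_sqrt (by norm_num)
  have hs0 : 0 ≤ Real.sqrt 3 := Real.sqrt_nonneg 3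
  constructor
  · constructor
    · intro h
      have h2 := h (-(2 + 2 * Real.sqrt 3)) (by nlinarith)
      nlinarith [sq_nonneg (Real.sqrt 3)]
    · exact B_aux_pos c
  · intro n _ hn
    exact B_aux_pos _ hn
end

section
/- Under the equal-magnitude hypothesis (all |η_i| equal and nonzero, all z_i ≤ 0, well-posed MRE least-squares problem), if n ≤ 415, then |R(z_i)| ≤ 1 for all i = 1,…,n. -/
open Finset
set_option maxHeartbeats 2000000
set_option maxRecDepth 100000


lemma mre_key' (p q r : ℝ) :
    826 * ((p^2 - q^2)^2 * (1 + p^2) * (1 + q^2) * r^2) ≤ (3 + 2*p^2 + 2*q^2 + p^2*q^2 + r^2) * (4 + 2*p^2 + 2*q^2 + p^2*q^2 + r^2) * ((2 + p^2 + 2*q^2 + p^2*q^2 + r^2)^2 * (1 + p^2)^2 + (2 + 2*p^2 + q^2 + p^2*q^2 + r^2)^2 * (1 + q^2)^2) := by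
  have h2 : (0:ℝ) ≤ 152*(p^2*(r^2-1))^2 + 152*(q^2*(r^2-1))^2 + (19*p^3-8*p^3*r^2)^2 + (19*q^3-8*q^3*r^2)^2 + (19*p^2-3*p^4*r^2)^2 + (19*q^2-3*q^4*r^2)^2 + (5*p^2*r^2-12*p^4)^2 + (5*q^2*r^2-12*q^4)^2 + 56*(p^3*q*(1-r^2))^2 + 56*(p*q^3*(1-r^2))^2 + 96 + 152*r^2 + 88*r^4 + 22*r^6 + 2*r^8 + 352*q^2 + 452*q^2*r^2 + 202*q^2*r^4 + 36*q^2*r^6 + 2*q^2*r^8 + 3*q^4 + 1*q^4*r^2 + 23*q^4*r^6 + 1*q^4*r^8 + 29*q^6 + 14*q^6*r^2 + 10*q^6*r^4 + 6*q^6*r^6 + 20*q^8 + 91*q^8*r^2 + 4*q^8*r^4 + 38*q^10 + 12*q^10*r^2 + 4*q^12 + 352*p^2 + 452*p^2*r^2 + 202*p^2*r^4 + 36*p^2*r^6 + 2*p^2*r^8 + 1256*p^2*q^2 + 2916*p^2*q^2*r^2 + 402*p^2*q^2*r^4 + 40*p^2*q^2*r^6 + 1778*p^2*q^4 + 2178*p^2*q^4*r^2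 + 294*p^2*q^4*r^4 + 16*p^2*q^4*r^6 + 1231*p^2*q^6 + 49*p^2*q^6*r^4 + 4*p^2*q^6*r^6 + 516*p^2*q^8 + 200*p^2*q^8*r^2 + 18*p^2*q^8*r^4 + 115*p^2*q^10 + 26*p^2*q^10*r^2 + 12*p^2*q^12 + 3*p^4 + 1*p^4*r^2 + 23*p^4*r^6 + 1*p^4*r^8 + 1778*p^4*q^2 + 2178*p^4*q^2*r^2 + 294*p^4*q^2*r^4 + 16*p^4*q^2*r^6 + 2400*p^4*q^4 + 2942*p^4*q^4*r^2 + 156*p^4*q^4*r^4 + 1630*p^4*q^6 + 584*p^4*q^6*r^2 + 36*p^4*q^6*r^4 + 605*p^4*q^8 + 141*p^4*q^8*r^2 + 6*p^4*q^8*r^4 + 126*p^4*q^10 + 18*p^4*q^10*r^2 + 13*p^4*q^12 + 29*p^6 + 14*p^6*r^2 + 10*p^6*r^4 + 6*p^6*r^6 + 1231*p^6*q^2 + 49*p^6*q^2*r^4 + 4*p^6*q^2*r^6 + 1630*p^6*q^4 + 584*p^6*q^4*r^2 + 36*p^6*q^4*r^4 + 1006*p^6*q^6 + 200*p^6*q^6*r^2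 + 326*p^6*q^8 + 32*p^6*q^8*r^2 + 59*p^6*q^10 + 4*p^6*q^10*r^2 + 6*p^6*q^12 + 20*p^8 + 91*p^8*r^2 + 4*p^8*r^4 + 516*p^8*q^2 + 200*p^8*q^2*r^2 + 18*p^8*q^2*r^4 + 605*p^8*q^4 + 141*p^8*q^4*r^2 + 6*p^8*q^4*r^4 + 326*p^8*q^6 + 32*p^8*q^6*r^2 + 82*p^8*q^8 + 10*p^8*q^10 + 1*p^8*q^12 + 38*p^10 + 12*p^10*r^2 + 115*p^10*q^2 + 26*p^10*q^2*r^2 + 126*p^10*q^4 + 18*p^10*q^4*r^2 + 59*p^10*q^6 + 4*p^10*q^6*r^2 + 10*p^10*q^8 + 4*p^12 + 12*p^12*q^2 + 13*p^12*q^4 + 6*p^12*q^6 + 1*p^12*q^8 := by positivity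
  have h : (3 + 2*p^2 + 2*q^2 + p^2*q^2 + r^2) * (4 + 2*p^2 + 2*q^2 + p^2*q^2 + r^2) * ((2 + p^2 + 2*q^2 + p^2*q^2 + r^2)^2 * (1 + p^2)^2 + (2 + 2*p^2 + q^2 + p^2*q^2 + r^2)^2 * (1 + q^2)^2) - (826 * ((p^2 - q^2)^2 * (1 + p^2) * (1 + q^2) * r^2)) = 152*(p^2*(r^2-1))^2 + 152*(q^2*(r^2-1))^2 + (19*p^3-8*p^3*r^2)^2 + (19*q^3-8*q^3*r^2)^2 + (19*p^2-3*p^4*r^2)^2 + (19*q^2-3*q^4*r^2)^2 + (5*p^2*r^2-12*p^4)^2 + (5*q^2*r^2-12*q^4)^2 + 56*(p^3*q*(1-r^2))^2 + 56*(p*q^3*(1-r^2))^2 + 96 + 152*r^2 + 88*r^4 + 22*r^6 + 2*r^8 + 352*q^2 + 452*q^2*r^2 + 202*q^2*r^4 + 36*q^2*r^6 + 2*q^2*r^8 + 3*q^4 + 1*q^4*r^2 + 23*q^4*r^6 + 1*q^4*r^8 + 29*q^6 + 14*q^6*r^2 + 10*q^6*r^4 + 6*q^6*r^6 + 20*q^8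 + 91*q^8*r^2 + 4*q^8*r^4 + 38*q^10 + 12*q^10*r^2 + 4*q^12 + 352*p^2 + 452*p^2*r^2 + 202*p^2*r^4 + 36*p^2*r^6 + 2*p^2*r^8 + 1256*p^2*q^2 + 2916*p^2*q^2*r^2 + 402*p^2*q^2*r^4 + 40*p^2*q^2*r^6 + 1778*p^2*q^4 + 2178*p^2*q^4*r^2 + 294*p^2*q^4*r^4 + 16*p^2*q^4*r^6 + 1231*p^2*q^6 + 49*p^2*q^6*r^4 + 4*p^2*q^6*r^6 + 516*p^2*q^8 + 200*p^2*q^8*r^2 + 18*p^2*q^8*r^4 + 115*p^2*q^10 + 26*p^2*q^10*r^2 + 12*p^2*q^12 + 3*p^4 + 1*p^4*r^2 + 23*p^4*r^6 + 1*p^4*r^8 + 1778*p^4*q^2 + 2178*p^4*q^2*r^2 + 294*p^4*q^2*r^4 + 16*p^4*q^2*r^6 + 2400*p^4*q^4 + 2942*p^4*q^4*r^2 + 156*p^4*q^4*r^4 + 1630*p^4*q^6 + 584*p^4*q^6*r^2 + 36*p^4*q^6*r^4 + 605*p^4*q^8 + 141*p^4*q^8*r^2 + 6*p^4*q^8*r^4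 + 126*p^4*q^10 + 18*p^4*q^10*r^2 + 13*p^4*q^12 + 29*p^6 + 14*p^6*r^2 + 10*p^6*r^4 + 6*p^6*r^6 + 1231*p^6*q^2 + 49*p^6*q^2*r^4 + 4*p^6*q^2*r^6 + 1630*p^6*q^4 + 584*p^6*q^4*r^2 + 36*p^6*q^4*r^4 + 1006*p^6*q^6 + 200*p^6*q^6*r^2 + 326*p^6*q^8 + 32*p^6*q^8*r^2 + 59*p^6*q^10 + 4*p^6*q^10*r^2 + 6*p^6*q^12 + 20*p^8 + 91*p^8*r^2 + 4*p^8*r^4 + 516*p^8*q^2 + 200*p^8*q^2*r^2 + 18*p^8*q^2*r^4 + 605*p^8*q^4 + 141*p^8*q^4*r^2 + 6*p^8*q^4*r^4 + 326*p^8*q^6 + 32*p^8*q^6*r^2 + 82*p^8*q^8 + 10*p^8*q^10 + 1*p^8*q^12 + 38*p^10 + 12*p^10*r^2 + 115*p^10*q^2 + 26*p^10*q^2*r^2 + 126*p^10*q^4 + 18*p^10*q^4*r^2 + 59*p^10*q^6 + 4*p^10*q^6*r^2 + 10*p^10*q^8 + 4*p^12 + 12*p^12*q^2 + 13*p^12*q^4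 + 6*p^12*q^6 + 1*p^12*q^8 := by ring
  linarith

lemma mre_key (a b s : ℝ) (ha : 0 ≤ a) (hb : 0 ≤ b) (hs : 0 ≤ s) :
    826 * ((a - b)^2 * (1 + a) * (1 + b) * s) ≤
      (3 + 2*a + 2*b + a*b + s) * (4 + 2*a + 2*b + a*b + s) *
        ((2 + a + 2*b + a*b + s)^2 * (1 + a)^2 + (2 + 2*a + b + a*b + s)^2 * (1 + b)^2) := by
  obtain ⟨p, rfl⟩ : ∃ p, a = p ^ 2 := ⟨Real.sqrt a, (Real.sq_sqrt ha).symm⟩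
  obtain ⟨q, rfl⟩ : ∃ q, b = q ^ 2 := ⟨Real.sqrt b, (Real.sq_sqrt hb).symm⟩
  obtain ⟨r, rfl⟩ : ∃ r, s = r ^ 2 := ⟨Real.sqrt s, (Real.sq_sqrt hs).symm⟩
  have := mre_key' p q r
  linarith

lemma mre_pair (u v w : ℝ) (hu : u ≤ 0) (hv : v ≤ 0) (hw : w ≤ 0) :
    -(((1 - w) * (2 - w) * ((u - w)^2 * (1 - u)^2) +
        (1 - w) * (2 - w) * ((v - w)^2 * (1 - v)^2)) / 826) ≤
      (u - v)^2 * (1 - u) * (1 - v) * ((1 - u) * (1 - v) + (1 - u - v) + w) := by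
  by_cases hs : 0 ≤ -2 + 2*u + 2*v - u*v - w
  · have h := mre_key (-u) (-v) (-2 + 2*u + 2*v - u*v - w) (by linarith) (by linarith) hs
    nlinarith [h]
  · push_neg at hs
    have h1 : 0 ≤ (u - v)^2 * (1 - u) * (1 - v) * ((1 - u) * (1 - v) + (1 - u - v) + w) := by
      have hb2 : 0 < (1 - u) * (1 - v) + (1 - u - v) + w := by nlinarith
      exact mul_nonneg (mul_nonneg (mul_nonneg (sq_nonneg _) (by linarith)) (by linarith)) hb2.le
    have h2 : 0 ≤ (1 - w) * (2 - w) * ((u - w)^2 * (1 - u)^2) +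
        (1 - w) * (2 - w) * ((v - w)^2 * (1 - v)^2) := by
      have c1 : (0:ℝ) ≤ (1 - w) * (2 - w) := mul_nonneg (by linarith) (by linarith)
      exact add_nonneg (mul_nonneg c1 (mul_nonneg (sq_nonneg _) (sq_nonneg _)))
        (mul_nonneg c1 (mul_nonneg (sq_nonneg _) (sq_nonneg _)))
    linarith

lemma double_comb2 {n : ℕ} (f1 g1 f2 g2 : Fin n → ℝ) (S : Fin n → Fin n → ℝ)
    (h : ∀ i j, S i j = f1 i * g1 j + f1 j * g1 i - (f2 i * g2 j + f2 j * g2 i)) :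
    ∑ i, ∑ j, S i j = 2 * ((∑ i, f1 i) * (∑ i, g1 i)) - 2 * ((∑ i, f2 i) * (∑ i, g2 i)) := by
  have e1 : ∑ i : Fin n, ∑ j : Fin n, f1 i * g1 j = (∑ i, f1 i) * (∑ i, g1 i) :=
    (Finset.sum_mul_sum _ _ _ _).symm
  have e1' : ∑ i : Fin n, ∑ j : Fin n, f1 j * g1 i = (∑ i, f1 i) * (∑ i, g1 i) := by
    rw [Finset.sum_comm]; exact e1
  have e2 : ∑ i : Fin n, ∑ j : Fin n, f2 i * g2 j = (∑ i, f2 i) * (∑ i, g2 i) :=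
    (Finset.sum_mul_sum _ _ _ _).symm
  have e2' : ∑ i : Fin n, ∑ j : Fin n, f2 j * g2 i = (∑ i, f2 i) * (∑ i, g2 i) := by
    rw [Finset.sum_comm]; exact e2
  calc ∑ i, ∑ j, S i j
      = ∑ i, ∑ j, (f1 i * g1 j + f1 j * g1 i - (f2 i * g2 j + f2 j * g2 i)) :=
        Finset.sum_congr rfl fun i _ => Finset.sum_congr rfl fun j _ => h i j
    _ = (∑ i, ∑ j, (f1 i * g1 j + f1 j * g1 i)) - ∑ i, ∑ j, (f2 i * g2 j + f2 j * g2 i) := by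
        simp only [Finset.sum_sub_distrib]
    _ = ((∑ i, ∑ j, f1 i * g1 j) + ∑ i, ∑ j, f1 j * g1 i)
          - ((∑ i, ∑ j, f2 i * g2 j) + ∑ i, ∑ j, f2 j * g2 i) := by
        simp only [Finset.sum_add_distrib]
    _ = 2 * ((∑ i, f1 i) * (∑ i, g1 i)) - 2 * ((∑ i, f2 i) * (∑ i, g2 i)) := by
        rw [e1, e1', e2, e2']; ring

lemma grad_zero (L Q : ℝ) (hQ : 0 ≤ Q) (h : ∀ t : ℝ, 0 ≤ t^2 * Q + 2 * t * L) : L = 0 := by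
  set c := L / (Q + 1) with hc
  have hQ1 : (0:ℝ) < Q + 1 := by linarith
  have e : (Q + 1) * c = L := by rw [hc]; field_simp
  have h1 := h (-c)
  have e2 : c * L = (Q + 1) * c^2 := by rw [← e]; ring
  have h3 : c^2 = 0 := by
    have hq : 0 ≤ c^2 * Q := mul_nonneg (sq_nonneg c) hQ
    nlinarith [h1, e2, sq_nonneg c]
  have h4 : c = 0 := by
    have := sq_eq_zero_iff (a := c)
    simp [sq] at this h3
    nlinarith [h3]
  rw [h4] at e; linarith

theorem normal_eqs (n : ℕ) (z : Fin n → ℝ) (α β : ℝ)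
    (hmin' : ∀ a b : ℝ,
      (∑ i, (1 + (z i - 1) * (α + β * z i))^2) ≤ ∑ i, (1 + (z i - 1) * (a + b * z i))^2) :
    (α * (∑ i, (z i - 1)^2) + β * (∑ i, z i * (z i - 1)^2) = ∑ i, (1 - z i)) ∧
    (α * (∑ i, z i * (z i - 1)^2) + β * (∑ i, z i^2 * (z i - 1)^2) = ∑ i, z i * (1 - z i)) := by
  have hL1 : (∑ i, (z i - 1) * (1 + (z i - 1) * (α + β * z i))) = 0 := by
    apply grad_zero _ (∑ i, (z i - 1)^2)
      (Finset.sum_nonneg fun i _ => sq_nonneg _)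
    intro t
    have h := hmin' (α + t) β
    have expand : (∑ i, (1 + (z i - 1) * ((α + t) + β * z i))^2)
        = (∑ i, (1 + (z i - 1) * (α + β * z i))^2)
          + (t^2 * (∑ i, (z i - 1)^2)
            + 2 * t * (∑ i, (z i - 1) * (1 + (z i - 1) * (α + β * z i)))) := by
      have e : ∀ i : Fin n, (1 + (z i - 1) * ((α + t) + β * z i))^2
          = (1 + (z i - 1) * (α + β * z i))^2
            + (t^2 * (z i - 1)^2
              + 2 * t * ((z i - 1) * (1 + (z i - 1) * (α + β * z i)))) := fun i => by ring
      rw [Finset.sum_congr rfl fun i _ => e i, Finset.sum_add_distrib, Finset.sum_add_distrib,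
        ← Finset.mul_sum, ← Finset.mul_sum]
    rw [expand] at h
    linarith
  have hL2 : (∑ i, z i * (z i - 1) * (1 + (z i - 1) * (α + β * z i))) = 0 := by
    apply grad_zero _ (∑ i, (z i * (z i - 1))^2)
      (Finset.sum_nonneg fun i _ => sq_nonneg _)
    intro t
    have h := hmin' α (β + t)
    have expand : (∑ i, (1 + (z i - 1) * (α + (β + t) * z i))^2)
        = (∑ i, (1 + (z i - 1) * (α + β * z i))^2)
          + (t^2 * (∑ i, (z i * (z i - 1))^2)
            + 2 * t * (∑ i, z i * (z i - 1) * (1 + (z i - 1) * (α + β * z i)))) := by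
      have e : ∀ i : Fin n, (1 + (z i - 1) * (α + (β + t) * z i))^2
          = (1 + (z i - 1) * (α + β * z i))^2
            + (t^2 * (z i * (z i - 1))^2
              + 2 * t * (z i * (z i - 1) * (1 + (z i - 1) * (α + β * z i)))) := fun i => by ring
      rw [Finset.sum_congr rfl fun i _ => e i, Finset.sum_add_distrib, Finset.sum_add_distrib,
        ← Finset.mul_sum, ← Finset.mul_sum]
    rw [expand] at h
    linarith
  constructor
  · have e : ∀ i : Fin n, (z i - 1) * (1 + (z i - 1) * (α + β * z i))
        = α * (z i - 1)^2 + β * (z i * (z i - 1)^2) - (1 - z i) := fun i => by ring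
    rw [Finset.sum_congr rfl fun i _ => e i, Finset.sum_sub_distrib, Finset.sum_add_distrib,
      ← Finset.mul_sum, ← Finset.mul_sum] at hL1
    linarith
  · have e : ∀ i : Fin n, z i * (z i - 1) * (1 + (z i - 1) * (α + β * z i))
        = α * (z i * (z i - 1)^2) + β * (z i^2 * (z i - 1)^2) - z i * (1 - z i) := fun i => by ring
    rw [Finset.sum_congr rfl fun i _ => e i, Finset.sum_sub_distrib, Finset.sum_add_distrib,
      ← Finset.mul_sum, ← Finset.mul_sum] at hL2
    linarith

theorem mre_engine (n : ℕ) (hn : 0 < n) (hn415 : n ≤ 415) (z : Fin n → ℝ)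
    (hz : ∀ i, z i ≤ 0) (i0 j0 : Fin n) (hne : z i0 ≠ z j0) (α β : ℝ)
    (E1 : α * (∑ i, (z i - 1)^2) + β * (∑ i, z i * (z i - 1)^2) = ∑ i, (1 - z i))
    (E2 : α * (∑ i, z i * (z i - 1)^2) + β * (∑ i, z i^2 * (z i - 1)^2) = ∑ i, z i * (1 - z i)) :
    ∀ k, |α + β * z k| ≤ 1 := by
  -- double sum identities
  have hDS1 : (∑ i, ∑ j, (z i - z j)^2 * ((z i - 1)^2 * (z j - 1)^2))
      = 2 * ((∑ i, (z i - 1)^2) * (∑ i, z i^2 * (z i - 1)^2))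
        - 2 * ((∑ i, z i * (z i - 1)^2) * (∑ i, z i * (z i - 1)^2)) :=
    double_comb2 _ _ _ _ _ (fun i j => by ring)
  have hDS2 : (∑ i, ∑ j, (z i - z j)^2 * ((1 - z i) * (1 - z j)) * (1 - z i - z j))
      = 2 * ((∑ i, (1 - z i)) * (∑ i, z i^2 * (z i - 1)^2))
        - 2 * ((∑ i, z i * (1 - z i)) * (∑ i, z i * (z i - 1)^2)) :=
    double_comb2 _ _ _ _ _ (fun i j => by ring)
  have hDS3 : (∑ i, ∑ j, (z i - z j)^2 * ((1 - z i) * (1 - z j)))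
      = 2 * ((∑ i, z i * (1 - z i)) * (∑ i, (z i - 1)^2))
        - 2 * ((∑ i, (1 - z i)) * (∑ i, z i * (z i - 1)^2)) :=
    double_comb2 _ _ _ _ _ (fun i j => by ring)
  -- alpha, beta from normal equations
  have hαD : α * ((∑ i, (z i - 1)^2) * (∑ i, z i^2 * (z i - 1)^2)
        - (∑ i, z i * (z i - 1)^2) * (∑ i, z i * (z i - 1)^2))
      = (∑ i, (1 - z i)) * (∑ i, z i^2 * (z i - 1)^2)
        - (∑ i, z i * (1 - z i)) * (∑ i, z i * (z i - 1)^2) := by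
    linear_combination (∑ i, z i^2 * (z i - 1)^2) * E1 - (∑ i, z i * (z i - 1)^2) * E2
  have hβD : β * ((∑ i, (z i - 1)^2) * (∑ i, z i^2 * (z i - 1)^2)
        - (∑ i, z i * (z i - 1)^2) * (∑ i, z i * (z i - 1)^2))
      = (∑ i, z i * (1 - z i)) * (∑ i, (z i - 1)^2)
        - (∑ i, (1 - z i)) * (∑ i, z i * (z i - 1)^2) := by
    linear_combination (∑ i, (z i - 1)^2) * E2 - (∑ i, z i * (z i - 1)^2) * E1
  -- positivity of the determinant
  have hS1nn : ∀ i j : Fin n, 0 ≤ (z i - z j)^2 * ((z i - 1)^2 * (z j - 1)^2) :=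
    fun i j => mul_nonneg (sq_nonneg _) (mul_nonneg (sq_nonneg _) (sq_nonneg _))
  have hDS1pos : 0 < ∑ i, ∑ j, (z i - z j)^2 * ((z i - 1)^2 * (z j - 1)^2) := by
    apply Finset.sum_pos' (fun i _ => Finset.sum_nonneg fun j _ => hS1nn i j)
    refine ⟨i0, Finset.mem_univ _, ?_⟩
    have hterm : 0 < (z i0 - z j0)^2 * ((z i0 - 1)^2 * (z j0 - 1)^2) := by
      have h1 : z i0 - z j0 ≠ 0 := sub_ne_zero.mpr hne
      have h2 : z i0 - 1 ≠ 0 := by have := hz i0; intro h; linarith [sub_eq_zero.mp h]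
      have h3 : z j0 - 1 ≠ 0 := by have := hz j0; intro h; linarith [sub_eq_zero.mp h]
      exact mul_pos (pow_two_pos_of_ne_zero h1)
        (mul_pos (pow_two_pos_of_ne_zero h2) (pow_two_pos_of_ne_zero h3))
    calc (0:ℝ) < (z i0 - z j0)^2 * ((z i0 - 1)^2 * (z j0 - 1)^2) := hterm
      _ ≤ ∑ j, (z i0 - z j)^2 * ((z i0 - 1)^2 * (z j - 1)^2) :=
          Finset.single_le_sum (fun j _ => hS1nn i0 j) (Finset.mem_univ j0)
  have hDpos : 0 < (∑ i, (z i - 1)^2) * (∑ i, z i^2 * (z i - 1)^2)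
      - (∑ i, z i * (z i - 1)^2) * (∑ i, z i * (z i - 1)^2) := by linarith
  -- beta nonneg
  have hDS3nn : 0 ≤ ∑ i : Fin n, ∑ j : Fin n, (z i - z j)^2 * ((1 - z i) * (1 - z j)) :=
    Finset.sum_nonneg fun i _ => Finset.sum_nonneg fun j _ =>
      mul_nonneg (sq_nonneg _) (mul_nonneg (by linarith [hz i]) (by linarith [hz j]))
  have hβnn : 0 ≤ β := by nlinarith [hDS3nn, hDpos, hβD, hDS3]
  -- the minimum point m
  obtain ⟨m, -, hm⟩ := Finset.exists_min_image Finset.univ z ⟨i0, Finset.mem_univ _⟩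
  have hzm : z m ≤ 0 := hz m
  -- P function
  set Pf : Fin n → ℝ := fun i => (1 - z m) * (2 - z m) * ((z i - z m)^2 * (1 - z i)^2) with hPf
  have hPnn : ∀ i, 0 ≤ Pf i := fun i => by
    rw [hPf]
    exact mul_nonneg (mul_nonneg (by linarith) (by linarith))
      (mul_nonneg (sq_nonneg _) (sq_nonneg _))
  have hPm : Pf m = 0 := by rw [hPf]; simp
  have hSignn : 0 ≤ ∑ i, Pf i := Finset.sum_nonneg fun i _ => hPnn i
  -- charging bound, pointwise
  have hpair : ∀ i j : Fin n,
      (if i = m then Pf j else 0) + (if j = m then Pf i else 0) - (Pf i + Pf j) / 826 ≤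
        (z i - z j)^2 * (1 - z i) * (1 - z j) * ((1 - z i) * (1 - z j) + (1 - z i - z j) + z m) := by
    intro i j
    by_cases hj : j = m
    · subst hj
      have heq : (z i - z j)^2 * (1 - z i) * (1 - z j) * ((1 - z i) * (1 - z j) + (1 - z i - z j) + z j)
          = Pf i := by rw [hPf]; ring
      by_cases hi : i = j
      · subst hi; simp [hPm]
      · simp only [hi, if_false, if_true, hPm]
        rw [heq]
        have := hPnn i
        linarith
    · by_cases hi : i = m
      · subst hi
        have heq : (z i - z j)^2 * (1 - z i) * (1 - z j) * ((1 - z i) * (1 - z j) + (1 - z i - z j) + z i)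
            = Pf j := by rw [hPf]; ring
        simp only [hj, if_false, if_true, hPm]
        rw [heq]
        have := hPnn j
        linarith
      · simp only [hi, hj, if_false]
        have h := mre_pair (z i) (z j) (z m) (hz i) (hz j) hzm
        rw [hPf]
        simp only []
        linarith [h]
  -- sum the charging bound
  have hTTlow : (∑ i, ∑ j, ((if i = m then Pf j else 0) + (if j = m then Pf i else 0) - (Pf i + Pf j) / 826))
      ≤ ∑ i, ∑ j, (z i - z j)^2 * (1 - z i) * (1 - z j) * ((1 - z i) * (1 - z j) + (1 - z i - z j) + z m) :=
    Finset.sum_le_sum fun i _ => Finset.sum_le_sum fun j _ => hpair i j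
  have c1 : (∑ i : Fin n, ∑ j : Fin n, (if i = m then Pf j else 0)) = ∑ i, Pf i := by
    have e : ∀ i : Fin n, (∑ j : Fin n, (if i = m then Pf j else 0))
        = if i = m then (∑ j, Pf j) else 0 := by
      intro i; split_ifs <;> simp
    rw [Finset.sum_congr rfl fun i _ => e i]
    simp
  have c2 : (∑ i : Fin n, ∑ j : Fin n, (if j = m then Pf i else 0)) = ∑ i, Pf i := by
    have e : ∀ i : Fin n, (∑ j : Fin n, (if j = m then Pf i else 0)) = Pf i := by
      intro i; simp
    rw [Finset.sum_congr rfl fun i _ => e i]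
  have c3 : (∑ i : Fin n, ∑ j : Fin n, ((Pf i + Pf j) / 826))
      = (2 * (n:ℝ) * (∑ i, Pf i)) / 826 := by
    have e : ∀ i : Fin n, (∑ j : Fin n, ((Pf i + Pf j) / 826))
        = ((n:ℝ) * Pf i + (∑ j, Pf j)) / 826 := by
      intro i
      rw [← Finset.sum_div, Finset.sum_add_distrib, Finset.sum_const, Finset.card_univ,
        Fintype.card_fin, nsmul_eq_mul]
    rw [Finset.sum_congr rfl fun i _ => e i, ← Finset.sum_div, Finset.sum_add_distrib,
      ← Finset.mul_sum, Finset.sum_const, Finset.card_univ, Fintype.card_fin, nsmul_eq_mul]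
    ring
  have hsplit3 : (∑ i, ∑ j, ((if i = m then Pf j else 0) + (if j = m then Pf i else 0) - (Pf i + Pf j) / 826))
      = (∑ i : Fin n, ∑ j : Fin n, (if i = m then Pf j else 0))
        + (∑ i : Fin n, ∑ j : Fin n, (if j = m then Pf i else 0))
        - (∑ i : Fin n, ∑ j : Fin n, ((Pf i + Pf j) / 826)) := by
    simp only [Finset.sum_add_distrib, Finset.sum_sub_distrib]
  have hcast : (n:ℝ) ≤ 415 := by exact_mod_cast hn415
  have hTTnn : 0 ≤ ∑ i, ∑ j, (z i - z j)^2 * (1 - z i) * (1 - z j) *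
      ((1 - z i) * (1 - z j) + (1 - z i - z j) + z m) := by
    have h1 : 2 * (n:ℝ) * (∑ i, Pf i) ≤ 830 * ∑ i, Pf i := by nlinarith [hSignn, hcast]
    rw [hsplit3, c1, c2, c3] at hTTlow
    linarith
  have hTTsplit : (∑ i, ∑ j, (z i - z j)^2 * (1 - z i) * (1 - z j) *
        ((1 - z i) * (1 - z j) + (1 - z i - z j) + z m))
      = (∑ i, ∑ j, (z i - z j)^2 * ((z i - 1)^2 * (z j - 1)^2))
        + (∑ i, ∑ j, (z i - z j)^2 * ((1 - z i) * (1 - z j)) * (1 - z i - z j))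
        + z m * (∑ i, ∑ j, (z i - z j)^2 * ((1 - z i) * (1 - z j))) := by
    have e : ∀ i j : Fin n, (z i - z j)^2 * (1 - z i) * (1 - z j) *
          ((1 - z i) * (1 - z j) + (1 - z i - z j) + z m)
        = (z i - z j)^2 * ((z i - 1)^2 * (z j - 1)^2)
          + (z i - z j)^2 * ((1 - z i) * (1 - z j)) * (1 - z i - z j)
          + z m * ((z i - z j)^2 * ((1 - z i) * (1 - z j))) := fun i j => by ring
    rw [Finset.sum_congr rfl fun i _ => Finset.sum_congr rfl fun j _ => e i j]
    simp only [Finset.sum_add_distrib, ← Finset.mul_sum]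
  have hTTval : (∑ i, ∑ j, (z i - z j)^2 * (1 - z i) * (1 - z j) *
        ((1 - z i) * (1 - z j) + (1 - z i - z j) + z m))
      = (1 + α + β * z m) * (2 * ((∑ i, (z i - 1)^2) * (∑ i, z i^2 * (z i - 1)^2)
          - (∑ i, z i * (z i - 1)^2) * (∑ i, z i * (z i - 1)^2))) := by
    linear_combination hTTsplit + hDS1 + hDS2 + z m * hDS3 - 2 * hαD - 2 * (z m) * hβD
  have hlowm : -1 ≤ α + β * z m := by
    rw [hTTval] at hTTnn
    nlinarith [hTTnn, hDpos]
  -- conclusion for each k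
  intro k
  have hUUnn : 0 ≤ ∑ i : Fin n, ∑ j : Fin n,
      (z i - z j)^2 * ((1 - z i) * (1 - z j)) * (z i * z j - z k) := by
    refine Finset.sum_nonneg fun i _ => Finset.sum_nonneg fun j _ => ?_
    have h1 : 0 ≤ z i * z j := by nlinarith [hz i, hz j]
    exact mul_nonneg (mul_nonneg (sq_nonneg _)
      (mul_nonneg (by linarith [hz i]) (by linarith [hz j]))) (by linarith [hz k])
  have hUUsplit : (∑ i : Fin n, ∑ j : Fin n,
        (z i - z j)^2 * ((1 - z i) * (1 - z j)) * (z i * z j - z k))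
      = (∑ i, ∑ j, (z i - z j)^2 * ((z i - 1)^2 * (z j - 1)^2))
        - (∑ i, ∑ j, (z i - z j)^2 * ((1 - z i) * (1 - z j)) * (1 - z i - z j))
        - z k * (∑ i, ∑ j, (z i - z j)^2 * ((1 - z i) * (1 - z j))) := by
    have e : ∀ i j : Fin n, (z i - z j)^2 * ((1 - z i) * (1 - z j)) * (z i * z j - z k)
        = (z i - z j)^2 * ((z i - 1)^2 * (z j - 1)^2)
          - (z i - z j)^2 * ((1 - z i) * (1 - z j)) * (1 - z i - z j)
          - z k * ((z i - z j)^2 * ((1 - z i) * (1 - z j))) := fun i j => by ring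
    rw [Finset.sum_congr rfl fun i _ => Finset.sum_congr rfl fun j _ => e i j]
    simp only [Finset.sum_sub_distrib, ← Finset.mul_sum]
  have hUUval : (∑ i : Fin n, ∑ j : Fin n,
        (z i - z j)^2 * ((1 - z i) * (1 - z j)) * (z i * z j - z k))
      = (1 - α - β * z k) * (2 * ((∑ i, (z i - 1)^2) * (∑ i, z i^2 * (z i - 1)^2)
          - (∑ i, z i * (z i - 1)^2) * (∑ i, z i * (z i - 1)^2))) := by
    linear_combination hUUsplit + hDS1 - hDS2 - z k * hDS3 + 2 * hαD + 2 * (z k) * hβD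
  have hup : α + β * z k ≤ 1 := by
    rw [hUUval] at hUUnn
    nlinarith [hUUnn, hDpos]
  have hmk : β * z m ≤ β * z k := mul_le_mul_of_nonneg_left (hm k (Finset.mem_univ k)) hβnn
  exact abs_le.mpr ⟨by linarith, hup⟩

open Finset in
/-- Stability of the 2-norm MRE method for small dimensions: if all `|η i|`
are equal and nonzero, all `z i ≤ 0`, the least-squares problem is well posed,
`(α, β)` minimizes the MRE objective, and `n ≤ 415`, then `|R(z i)| ≤ 1` for
all `i`, where `R(z) = α + β z`. -/
theorem mre_stability_small_n (n : ℕ) (hn : 0 < n) (hn415 : n ≤ 415)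
    (z η : Fin n → ℝ)
    (hz : ∀ i, z i ≤ 0)
    (hηeq : ∀ i j, |η i| = |η j|) (hη0 : ∀ i, η i ≠ 0)
    (hwp : ∃ i j, i ≠ j ∧ z i ≠ z j ∧ z i ≠ 1 ∧ z j ≠ 1 ∧ η i * η j ≠ 0)
    (α β : ℝ)
    (hmin : ∀ a b : ℝ,
      (∑ i, (η i) ^ 2 * (1 + (z i - 1) * (α + β * z i)) ^ 2) ≤
      ∑ i, (η i) ^ 2 * (1 + (z i - 1) * (a + b * z i)) ^ 2) :
    ∀ i, |α + β * z i| ≤ 1 := by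
  obtain ⟨i0, j0, -, hne, -, -, -⟩ := hwp
  have hcpos : 0 < (η i0) ^ 2 := pow_two_pos_of_ne_zero (hη0 i0)
  have hc : ∀ i, (η i) ^ 2 = (η i0) ^ 2 := fun i => by
    rw [← sq_abs, hηeq i i0, sq_abs]
  have hmin' : ∀ a b : ℝ,
      (∑ i, (1 + (z i - 1) * (α + β * z i))^2) ≤ ∑ i, (1 + (z i - 1) * (a + b * z i))^2 := by
    intro a b
    have h := hmin a b
    have e1 : (∑ i, (η i) ^ 2 * (1 + (z i - 1) * (α + β * z i)) ^ 2)
        = (η i0)^2 * ∑ i, (1 + (z i - 1) * (α + β * z i))^2 := by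
      rw [Finset.mul_sum]
      exact Finset.sum_congr rfl fun i _ => by rw [hc i]
    have e2 : (∑ i, (η i) ^ 2 * (1 + (z i - 1) * (a + b * z i)) ^ 2)
        = (η i0)^2 * ∑ i, (1 + (z i - 1) * (a + b * z i))^2 := by
      rw [Finset.mul_sum]
      exact Finset.sum_congr rfl fun i _ => by rw [hc i]
    rw [e1, e2] at h
    exact le_of_mul_le_mul_left h hcpos
  obtain ⟨E1, E2⟩ := normal_eqs n z α β hmin'
  exact mre_engine n hn hn415 z hz i0 j0 hne α β E1 E2
end

section
/- Under the equal-magnitude hypothesis, if n > 415 and z_n = min_i z_i ≤ 10 − √n, then |R(z_i)| ≤ 1 for all i. -/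
open Finset

private def gfun (m u v : ℝ) : ℝ := u*v*(u-v)^2*(u+v+u*v-m)

private lemma gfun_symm (m u v : ℝ) : gfun m u v = gfun m v u := by
  simp only [gfun]; ring

private lemma gfun_good (m u : ℝ) (hm : 0 ≤ m) : 0 ≤ gfun m u m := by
  have h : gfun m u m = m*(1+m)*(u^2*(m-u)^2) := by simp only [gfun]; ring
  rw [h]
  exact mul_nonneg (mul_nonneg hm (by linarith)) (by positivity)

private lemma quad_zero (L Q : ℝ) (hQ : 0 ≤ Q) (h : ∀ ε : ℝ, 0 ≤ 2*ε*L + ε^2*Q) : L = 0 := by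
  have h1 := h (-L/(Q+1))
  have hQ1 : (0:ℝ) < Q + 1 := by linarith
  have e : 2*(-L/(Q+1))*L + (-L/(Q+1))^2*Q = -(L^2*(Q+2))/(Q+1)^2 := by
    field_simp; ring
  rw [e] at h1
  have h2 : 0 ≤ -(L^2*(Q+2)) := by
    have := mul_nonneg h1 (sq_nonneg (Q+1))
    rwa [div_mul_cancel₀] at this
    positivity
  nlinarith [sq_nonneg L]

private lemma sum_quad {n : ℕ} (t : Fin n → ℝ) (c1 c2 c3 c4 : ℝ) :
    ∑ i, (c1 * t i + c2 * (t i)^2 + c3 * (t i)^3 + c4 * (t i)^4)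
      = c1 * (∑ i, t i) + c2 * (∑ i, (t i)^2) + c3 * (∑ i, (t i)^3) + c4 * (∑ i, (t i)^4) := by
  simp only [Finset.sum_add_distrib, Finset.mul_sum]

private lemma double_id {n : ℕ} (t : Fin n → ℝ) (a c : ℝ) :
    ∑ i, ∑ k, (t i * t k * (t i - t k)^2 * (a*(t i + t k) + t i * t k + c))
      = 2*((∑ i, (t i)^2) * (∑ i, (t i)^4) - (∑ i, (t i)^3)^2
          + a*((∑ i, t i) * (∑ i, (t i)^4) - (∑ i, (t i)^2) * (∑ i, (t i)^3))
          + c*((∑ i, t i) * (∑ i, (t i)^3) - (∑ i, (t i)^2)^2)) := by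
  have inner : ∀ u : ℝ, (∑ k, (u * t k * (u - t k)^2 * (a*(u + t k) + u * t k + c)))
      = (a*u^4 + c*u^3) * (∑ i, t i) + (u^4 - a*u^3 - 2*c*u^2) * (∑ i, (t i)^2)
        + (-(2*u^3) - a*u^2 + c*u) * (∑ i, (t i)^3) + (u^2 + a*u) * (∑ i, (t i)^4) := by
    intro u
    rw [← sum_quad t (a*u^4 + c*u^3) (u^4 - a*u^3 - 2*c*u^2) (-(2*u^3) - a*u^2 + c*u) (u^2 + a*u)]
    exact Finset.sum_congr rfl fun k _ => by ring
  calc ∑ i, ∑ k, (t i * t k * (t i - t k)^2 * (a*(t i + t k) + t i * t k + c))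
      = ∑ i, ((a*(t i)^4 + c*(t i)^3) * (∑ j, t j) + ((t i)^4 - a*(t i)^3 - 2*c*(t i)^2) * (∑ j, (t j)^2)
        + (-(2*(t i)^3) - a*(t i)^2 + c*(t i)) * (∑ j, (t j)^3) + ((t i)^2 + a*(t i)) * (∑ j, (t j)^4)) :=
        Finset.sum_congr rfl fun i _ => inner (t i)
    _ = ∑ i, ((c*(∑ j, (t j)^3) + a*(∑ j, (t j)^4)) * t i
          + (-(2*c)*(∑ j, (t j)^2) - a*(∑ j, (t j)^3) + (∑ j, (t j)^4)) * (t i)^2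
          + (c*(∑ j, t j) - a*(∑ j, (t j)^2) - 2*(∑ j, (t j)^3)) * (t i)^3
          + (a*(∑ j, t j) + (∑ j, (t j)^2)) * (t i)^4) :=
        Finset.sum_congr rfl fun i _ => by ring
    _ = (c*(∑ j, (t j)^3) + a*(∑ j, (t j)^4)) * (∑ i, t i)
          + (-(2*c)*(∑ j, (t j)^2) - a*(∑ j, (t j)^3) + (∑ j, (t j)^4)) * (∑ i, (t i)^2)
          + (c*(∑ j, t j) - a*(∑ j, (t j)^2) - 2*(∑ j, (t j)^3)) * (∑ i, (t i)^3)
          + (a*(∑ j, t j) + (∑ j, (t j)^2)) * (∑ i, (t i)^4) := sum_quad t _ _ _ _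
    _ = _ := by ring

private lemma key_aux (nn m u v : ℝ) (hnn : 0 < nn) (hN : nn ≤ 4*m*(m+1))
    (hu : 1 ≤ u) (huv : u ≤ v) (hvm : v ≤ m) (hbad : u + v + u*v < m) :
    nn * (u*v*(u-v)^2*(m-u-v-u*v)) ≤ m*(m+1)*(u^2*(m-u)^2 + v^2*(m-v)^2) := by
  have hv1 : 1 ≤ v := le_trans hu huv
  have hu0 : (0:ℝ) < u := by linarith
  have hv0 : (0:ℝ) < v := by linarith
  have hm1 : 1 ≤ m := le_trans hv1 hvm
  have hX : 0 ≤ m - u - v - u*v := by linarith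
  have st1 : 4*(1+v)*(u*(m-u-v-u*v)) ≤ (m-v)^2 := by
    nlinarith [sq_nonneg (2*u*(1+v) - (m-v))]
  have st2 : (u-v)^2 ≤ (v-1)^2 := by nlinarith
  have st3 : nn*(v-1)^2 ≤ 4*m*(m+1)*(v*(1+v)) := by
    have a1 : nn*(v-1)^2 ≤ 4*m*(m+1)*(v-1)^2 := mul_le_mul_of_nonneg_right hN (sq_nonneg _)
    have a2 : 4*m*(m+1)*(v-1)^2 ≤ 4*m*(m+1)*(v*(1+v)) := by
      apply mul_le_mul_of_nonneg_left _ (by nlinarith : (0:ℝ) ≤ 4*m*(m+1))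
      nlinarith
    linarith
  have e1 : nn * (u*v*(u-v)^2*(m-u-v-u*v)) ≤ nn * (v*(v-1)^2*(u*(m-u-v-u*v))) := by
    apply mul_le_mul_of_nonneg_left _ hnn.le
    have h := mul_le_mul_of_nonneg_right st2 (mul_nonneg (mul_nonneg hv0.le hu0.le) hX)
    linarith [h]
  have e2 : nn * (v*(v-1)^2*(u*(m-u-v-u*v))) ≤ m*(m+1)*(v^2*(m-v)^2) := by
    have huX : 0 ≤ u*(m-u-v-u*v) := mul_nonneg hu0.le hX
    have b1 := mul_le_mul_of_nonneg_right st3 (mul_nonneg hv0.le huX)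
    have hmv : (0:ℝ) ≤ m*(m+1)*v^2 := by nlinarith [sq_nonneg v]
    have b2 := mul_le_mul_of_nonneg_left st1 hmv
    linarith [b1, b2]
  have e3 : m*(m+1)*(v^2*(m-v)^2) ≤ m*(m+1)*(u^2*(m-u)^2 + v^2*(m-v)^2) := by
    have h4 : (0:ℝ) ≤ m*(m+1)*(u^2*(m-u)^2) :=
      mul_nonneg (by nlinarith) (by positivity)
    linarith [h4]
  linarith

private lemma key_pair_le (nn m u v : ℝ) (hnn : 0 < nn) (hN : nn ≤ 4*m*(m+1))
    (hu : 1 ≤ u) (huv : u ≤ v) (hvm : v ≤ m) :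
    -(1/nn) * (gfun m u m + gfun m v m) ≤ gfun m u v := by
  have hv1 : 1 ≤ v := le_trans hu huv
  have hm1 : 1 ≤ m := le_trans hv1 hvm
  have hgu : 0 ≤ gfun m u m := gfun_good m u (by linarith)
  have hgv : 0 ≤ gfun m v m := gfun_good m v (by linarith)
  rcases le_or_gt m (u+v+u*v) with h | h
  · have hg : 0 ≤ gfun m u v := by
      simp only [gfun]
      exact mul_nonneg (mul_nonneg (mul_nonneg (by linarith) (by linarith)) (sq_nonneg _))
        (by linarith)
    nlinarith [mul_nonneg (le_of_lt (show (0:ℝ) < 1/nn by positivity)) (add_nonneg hgu hgv)]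
  · have hmain := key_aux nn m u v hnn hN hu huv hvm h
    have hPeq : gfun m u m + gfun m v m = m*(m+1)*(u^2*(m-u)^2 + v^2*(m-v)^2) := by
      simp only [gfun]; ring
    have hguv : gfun m u v = -(u*v*(u-v)^2*(m-u-v-u*v)) := by simp only [gfun]; ring
    rw [hguv, hPeq]
    have h2 : u*v*(u-v)^2*(m-u-v-u*v) ≤ (1/nn)*(m*(m+1)*(u^2*(m-u)^2 + v^2*(m-v)^2)) := by
      rw [one_div, inv_mul_eq_div, le_div_iff₀ hnn]
      nlinarith [hmain]
    linarith

private lemma key_pair (nn m u v : ℝ) (hnn : 0 < nn) (hN : nn ≤ 4*m*(m+1))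
    (hu : 1 ≤ u) (hum : u ≤ m) (hv : 1 ≤ v) (hvm : v ≤ m) :
    -(1/nn) * (gfun m u m + gfun m v m) ≤ gfun m u v := by
  rcases le_total u v with huv | hvu
  · exact key_pair_le nn m u v hnn hN hu huv hvm
  · have h := key_pair_le nn m v u hnn hN hv hvu hum
    have hs := gfun_symm m u v
    linarith

private lemma charge {n : ℕ} (t : Fin n → ℝ) (i₀ : Fin n) (ht : ∀ i, 1 ≤ t i)
    (htm : ∀ i, t i ≤ t i₀) (hN : (n : ℝ) - 1 ≤ 4 * t i₀ * (t i₀ + 1)) (hn : 2 ≤ n) :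
    0 ≤ ∑ i, ∑ k, gfun (t i₀) (t i) (t k) := by
  classical
  have hmem : i₀ ∈ (univ : Finset (Fin n)) := mem_univ _
  set E := (univ : Finset (Fin n)).erase i₀ with hE
  have hcard : (E.card : ℝ) = (n:ℝ) - 1 := by
    rw [hE, card_erase_of_mem hmem, card_univ, Fintype.card_fin]
    have h1 : 1 ≤ n := by omega
    push_cast [Nat.cast_sub h1]
    ring
  have hnn : (0:ℝ) < (n:ℝ) - 1 := by
    have : (2:ℝ) ≤ (n:ℝ) := by exact_mod_cast hn
    linarith
  have hm0 : (0:ℝ) ≤ t i₀ := by linarith [ht i₀]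
  set nn := (n:ℝ) - 1 with hnndef
  set T := ∑ i ∈ E, gfun (t i₀) (t i) (t i₀) with hT
  have hTnn : 0 ≤ T := sum_nonneg fun i _ => gfun_good _ _ hm0
  have h2 : (∑ i, ∑ k, gfun (t i₀) (t i) (t k))
      = (∑ k, gfun (t i₀) (t i₀) (t k)) + ∑ i ∈ E, (∑ k, gfun (t i₀) (t i) (t k)) :=
    (Finset.add_sum_erase _ _ hmem).symm
  have hrow : ∀ u : ℝ, (∑ k, gfun (t i₀) u (t k))
      = gfun (t i₀) u (t i₀) + ∑ k ∈ E, gfun (t i₀) u (t k) :=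
    fun u => (Finset.add_sum_erase _ _ hmem).symm
  have hdiag : gfun (t i₀) (t i₀) (t i₀) = 0 := by simp only [gfun]; ring
  have hfirst : (∑ k, gfun (t i₀) (t i₀) (t k)) = T := by
    rw [hrow (t i₀), hdiag, zero_add, hT]
    exact Finset.sum_congr rfl fun k _ => gfun_symm _ _ _
  have hblock : ∀ i ∈ E, -(1/nn) * ((E.card : ℝ) * gfun (t i₀) (t i) (t i₀) + T)
      ≤ ∑ k ∈ E, gfun (t i₀) (t i) (t k) := by
    intro i _
    have hsum : ∑ k ∈ E, (-(1/nn) * (gfun (t i₀) (t i) (t i₀) + gfun (t i₀) (t k) (t i₀)))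
        ≤ ∑ k ∈ E, gfun (t i₀) (t i) (t k) := by
      apply Finset.sum_le_sum
      intro k _
      exact key_pair nn (t i₀) (t i) (t k) hnn (by rw [hnndef]; linarith [hN])
        (ht i) (htm i) (ht k) (htm k)
    calc -(1/nn) * ((E.card : ℝ) * gfun (t i₀) (t i) (t i₀) + T)
        = ∑ k ∈ E, (-(1/nn) * (gfun (t i₀) (t i) (t i₀) + gfun (t i₀) (t k) (t i₀))) := by
          rw [← Finset.mul_sum, Finset.sum_add_distrib, Finset.sum_const, nsmul_eq_mul, hT]
      _ ≤ _ := hsum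
  have hmid : ∑ i ∈ E, (∑ k, gfun (t i₀) (t i) (t k))
      ≥ ∑ i ∈ E, (gfun (t i₀) (t i) (t i₀)
          + (-(1/nn) * ((E.card : ℝ) * gfun (t i₀) (t i) (t i₀) + T))) := by
    apply Finset.sum_le_sum
    intro i hi
    rw [hrow (t i)]
    exact add_le_add le_rfl (hblock i hi)
  have hlast : ∑ i ∈ E, (gfun (t i₀) (t i) (t i₀)
        + (-(1/nn) * ((E.card : ℝ) * gfun (t i₀) (t i) (t i₀) + T)))
      = T + (-(1/nn)) * ((E.card : ℝ) * T + (E.card : ℝ) * T) := by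
    rw [Finset.sum_add_distrib, ← hT, ← Finset.mul_sum, Finset.sum_add_distrib,
      Finset.sum_const, nsmul_eq_mul, ← Finset.mul_sum, ← hT]
  have hfin : T + (-(1/nn)) * ((E.card : ℝ) * T + (E.card : ℝ) * T) = -T := by
    rw [hcard]
    have hnn0 : nn ≠ 0 := ne_of_gt hnn
    field_simp
    ring
  rw [h2, hfirst]
  have hmid2 := hmid
  rw [hlast, hfin] at hmid2
  linarith

set_option maxHeartbeats 1000000 in

open Finset Real in
/-- Stability of the 2-norm MRE method for large dimensions: under the
equal-magnitude hypothesis, if `n > 415` and `zₙ = minᵢ z i ≤ 10 − √n`, then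
`|R(z i)| ≤ 1` for all `i`, where `R(z) = α + β z`. -/
theorem mre_stability_large_n (n : ℕ) (hn415 : 415 < n)
    (z η : Fin n → ℝ)
    (hz : ∀ i, z i ≤ 0)
    (hηeq : ∀ i j, |η i| = |η j|) (hη0 : ∀ i, η i ≠ 0)
    (hwp : ∃ i j, i ≠ j ∧ z i ≠ z j ∧ z i ≠ 1 ∧ z j ≠ 1 ∧ η i * η j ≠ 0)
    (i₀ : Fin n) (hmin' : ∀ i, z i₀ ≤ z i)
    (hzn : z i₀ ≤ 10 - Real.sqrt n)
    (α β : ℝ)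
    (hmin : ∀ a b : ℝ,
      (∑ i, (η i) ^ 2 * (1 + (z i - 1) * (α + β * z i)) ^ 2) ≤
      ∑ i, (η i) ^ 2 * (1 + (z i - 1) * (a + b * z i)) ^ 2) :
    ∀ i, |α + β * z i| ≤ 1 := by
  -- the weights are all equal and positive, so we can drop them
  have hc : ∀ i, (η i)^2 = (η i₀)^2 := fun i => by
    rw [← sq_abs (η i), ← sq_abs (η i₀), hηeq i i₀]
  have hcpos : 0 < (η i₀)^2 := lt_of_le_of_ne (sq_nonneg _) (Ne.symm (pow_ne_zero 2 (hη0 i₀)))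
  have hmin2 : ∀ a b : ℝ, (∑ i, (1 + (z i - 1) * (α + β * z i)) ^ 2) ≤
      ∑ i, (1 + (z i - 1) * (a + b * z i)) ^ 2 := by
    intro a b
    have h := hmin a b
    have e1 : (∑ i, (η i)^2 * (1 + (z i - 1) * (α + β * z i)) ^ 2)
        = (η i₀)^2 * ∑ i, (1 + (z i - 1) * (α + β * z i)) ^ 2 := by
      rw [Finset.mul_sum]; exact Finset.sum_congr rfl fun i _ => by rw [hc i]
    have e2 : (∑ i, (η i)^2 * (1 + (z i - 1) * (a + b * z i)) ^ 2)
        = (η i₀)^2 * ∑ i, (1 + (z i - 1) * (a + b * z i)) ^ 2 := by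
      rw [Finset.mul_sum]; exact Finset.sum_congr rfl fun i _ => by rw [hc i]
    rw [e1, e2] at h
    exact le_of_mul_le_mul_left h hcpos
  -- normal equations
  have L1 : (∑ i, (z i - 1) * (1 + (z i - 1) * (α + β * z i))) = 0 := by
    apply quad_zero _ (∑ i, (z i - 1)^2) (Finset.sum_nonneg fun i _ => sq_nonneg _)
    intro ε
    have h := hmin2 (α + ε) β
    have e : (∑ i, (1 + (z i - 1) * ((α + ε) + β * z i)) ^ 2)
        = (∑ i, (1 + (z i - 1) * (α + β * z i)) ^ 2)
          + (2*ε*(∑ i, (z i - 1) * (1 + (z i - 1) * (α + β * z i))) + ε^2*(∑ i, (z i - 1)^2)) := by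
      rw [Finset.mul_sum, Finset.mul_sum, ← Finset.sum_add_distrib, ← Finset.sum_add_distrib]
      exact Finset.sum_congr rfl fun i _ => by ring
    rw [e] at h
    linarith
  have L2 : (∑ i, (z i - 1) * (z i) * (1 + (z i - 1) * (α + β * z i))) = 0 := by
    apply quad_zero _ (∑ i, (z i - 1)^2 * (z i)^2)
      (Finset.sum_nonneg fun i _ => by positivity)
    intro ε
    have h := hmin2 α (β + ε)
    have e : (∑ i, (1 + (z i - 1) * (α + (β + ε) * z i)) ^ 2)
        = (∑ i, (1 + (z i - 1) * (α + β * z i)) ^ 2)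
          + (2*ε*(∑ i, (z i - 1) * (z i) * (1 + (z i - 1) * (α + β * z i)))
            + ε^2*(∑ i, (z i - 1)^2 * (z i)^2)) := by
      rw [Finset.mul_sum, Finset.mul_sum, ← Finset.sum_add_distrib, ← Finset.sum_add_distrib]
      exact Finset.sum_congr rfl fun i _ => by ring
    rw [e] at h
    linarith
  -- switch to t i = 1 - z i
  set t : Fin n → ℝ := fun i => 1 - z i with ht_def
  have htz : ∀ i, t i = 1 - z i := fun i => by rw [ht_def]
  have ht1 : ∀ i, 1 ≤ t i := fun i => by rw [htz i]; linarith [hz i]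
  have htmax : ∀ i, t i ≤ t i₀ := fun i => by rw [htz i, htz i₀]; linarith [hmin' i]
  -- power-sum form of the normal equations
  have eqA : ∑ i, (t i - (α+β)*(t i)^2 + β*(t i)^3) = 0 := by
    have e : ∀ i : Fin n, t i - (α+β)*(t i)^2 + β*(t i)^3
        = -((z i - 1) * (1 + (z i - 1) * (α + β * z i))) := fun i => by rw [htz i]; ring
    calc ∑ i, (t i - (α+β)*(t i)^2 + β*(t i)^3)
        = ∑ i, -((z i - 1) * (1 + (z i - 1) * (α + β * z i))) :=
          Finset.sum_congr rfl fun i _ => e i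
      _ = -∑ i, ((z i - 1) * (1 + (z i - 1) * (α + β * z i))) := by
          rw [Finset.sum_neg_distrib]
      _ = 0 := by rw [L1, neg_zero]
  have eqB : ∑ i, ((t i)^2 - (α+β)*(t i)^3 + β*(t i)^4) = 0 := by
    have e : ∀ i : Fin n, (t i)^2 - (α+β)*(t i)^3 + β*(t i)^4
        = (z i - 1) * (z i) * (1 + (z i - 1) * (α + β * z i))
          + (t i - (α+β)*(t i)^2 + β*(t i)^3) := fun i => by rw [htz i]; ring
    calc ∑ i, ((t i)^2 - (α+β)*(t i)^3 + β*(t i)^4)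
        = ∑ i, ((z i - 1) * (z i) * (1 + (z i - 1) * (α + β * z i))
            + (t i - (α+β)*(t i)^2 + β*(t i)^3)) := Finset.sum_congr rfl fun i _ => e i
      _ = (∑ i, (z i - 1) * (z i) * (1 + (z i - 1) * (α + β * z i)))
            + ∑ i, (t i - (α+β)*(t i)^2 + β*(t i)^3) := Finset.sum_add_distrib
      _ = 0 := by rw [L2, eqA, add_zero]
  have eq1' : (∑ i, t i) - (α+β)*(∑ i, (t i)^2) + β*(∑ i, (t i)^3) = 0 := by
    have h := eqA
    rw [Finset.sum_add_distrib, Finset.sum_sub_distrib, ← Finset.mul_sum, ← Finset.mul_sum] at h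
    exact h
  have eq2' : (∑ i, (t i)^2) - (α+β)*(∑ i, (t i)^3) + β*(∑ i, (t i)^4) = 0 := by
    have h := eqB
    rw [Finset.sum_add_distrib, Finset.sum_sub_distrib, ← Finset.mul_sum, ← Finset.mul_sum] at h
    exact h
  -- Cramer-type identities
  have hA : ((∑ i, (t i)^2)*(∑ i, (t i)^4) - (∑ i, (t i)^3)^2) * (α+β)
      = (∑ i, t i)*(∑ i, (t i)^4) - (∑ i, (t i)^2)*(∑ i, (t i)^3) := by
    linear_combination (-(∑ i, (t i)^4)) * eq1' + (∑ i, (t i)^3) * eq2'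
  have hB : ((∑ i, (t i)^2)*(∑ i, (t i)^4) - (∑ i, (t i)^3)^2) * β
      = (∑ i, t i)*(∑ i, (t i)^3) - (∑ i, (t i)^2)^2 := by
    linear_combination (-(∑ i, (t i)^3)) * eq1' + (∑ i, (t i)^2) * eq2'
  -- positivity of the determinant
  have hid0 := double_id t 0 0
  have hpt : ∀ i k : Fin n, 0 ≤ t i * t k * (t i - t k)^2 * (0*(t i + t k) + t i * t k + 0) := by
    intro i k
    have h1 := ht1 i; have h2 := ht1 k
    have hf : (0:ℝ) ≤ 0*(t i + t k) + t i * t k + 0 := by nlinarith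
    exact mul_nonneg (mul_nonneg (mul_nonneg (by linarith) (by linarith)) (sq_nonneg _)) hf
  obtain ⟨a, b, hab, hzab, -, -, -⟩ := hwp
  have htab : t a ≠ t b := fun h => hzab (by rw [htz a, htz b] at h; linarith)
  have htermpos : 0 < t a * t b * (t a - t b)^2 * (0*(t a + t b) + t a * t b + 0) := by
    have h1 : (0:ℝ) < t a := by linarith [ht1 a]
    have h2 : (0:ℝ) < t b := by linarith [ht1 b]
    have h3 : (0:ℝ) < (t a - t b)^2 := by
      have hne : t a - t b ≠ 0 := sub_ne_zero_of_ne htab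
      positivity
    have h4 : (0:ℝ) < 0*(t a + t b) + t a * t b + 0 := by nlinarith
    exact mul_pos (mul_pos (mul_pos h1 h2) h3) h4
  have hsum_ge : t a * t b * (t a - t b)^2 * (0*(t a + t b) + t a * t b + 0)
      ≤ ∑ i, ∑ k, (t i * t k * (t i - t k)^2 * (0*(t i + t k) + t i * t k + 0)) := by
    calc t a * t b * (t a - t b)^2 * (0*(t a + t b) + t a * t b + 0)
        ≤ ∑ k, (t a * t k * (t a - t k)^2 * (0*(t a + t k) + t a * t k + 0)) :=
          Finset.single_le_sum (fun k _ => hpt a k) (mem_univ b)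
      _ ≤ _ := Finset.single_le_sum
          (fun i _ => Finset.sum_nonneg fun k _ => hpt i k) (mem_univ a)
  have hD : 0 < (∑ i, (t i)^2)*(∑ i, (t i)^4) - (∑ i, (t i)^3)^2 := by
    linarith [hid0, hsum_ge, htermpos]
  -- bound needed for the charging argument
  have hn2 : 2 ≤ n := by omega
  have h289 : (289:ℝ) ≤ (n:ℝ) := by
    have : (289:ℕ) ≤ n := by omega
    exact_mod_cast this
  have hx : (17:ℝ) ≤ Real.sqrt n := by
    have h17 : Real.sqrt 289 = 17 := by
      rw [show (289:ℝ) = 17^2 by norm_num, Real.sqrt_sq (by norm_num : (0:ℝ) ≤ 17)]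
    rw [← h17]
    exact Real.sqrt_le_sqrt h289
  have hsq : Real.sqrt n ^ 2 = (n:ℝ) := Real.sq_sqrt (by positivity)
  have hm9 : Real.sqrt n - 9 ≤ t i₀ := by rw [htz i₀]; linarith [hzn]
  have hN4 : (n:ℝ) - 1 ≤ 4 * t i₀ * (t i₀ + 1) := by
    have hprod : 0 ≤ (t i₀ - (Real.sqrt n - 9)) * (t i₀ + (Real.sqrt n - 8)) :=
      mul_nonneg (by linarith) (by linarith [ht1 i₀])
    have h17 : 0 ≤ (Real.sqrt n - 17) * (3*Real.sqrt n - 17) :=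
      mul_nonneg (by linarith) (by linarith)
    nlinarith [hprod, h17, hsq]
  -- the charging bound
  have hML : 0 ≤ ∑ i, ∑ k, (t i * t k * (t i - t k)^2 * (1*(t i + t k) + t i * t k + -(t i₀))) := by
    have hch := charge t i₀ ht1 htmax hN4 hn2
    have heq : (∑ i, ∑ k, gfun (t i₀) (t i) (t k))
        = ∑ i, ∑ k, (t i * t k * (t i - t k)^2 * (1*(t i + t k) + t i * t k + -(t i₀))) :=
      Finset.sum_congr rfl fun i _ => Finset.sum_congr rfl fun k _ => by
        simp only [gfun]; ring
    linarith [hch, heq.symm.le, heq.le]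
  -- conclude for each index
  intro l
  have htl := htmax l
  have hDR : ((∑ i, (t i)^2)*(∑ i, (t i)^4) - (∑ i, (t i)^3)^2) * (α + β * z l)
      = ((∑ i, t i)*(∑ i, (t i)^4) - (∑ i, (t i)^2)*(∑ i, (t i)^3))
        - t l * ((∑ i, t i)*(∑ i, (t i)^3) - (∑ i, (t i)^2)^2) := by
    have htzl := htz l
    linear_combination hA - (1 - z l) * hB
      + ((∑ i, t i)*(∑ i, (t i)^3) - (∑ i, (t i)^2)^2) * htzl
  -- upper bound : R ≤ 1
  have hidU := double_id t (-1) (t l)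
  have hUnn : 0 ≤ ∑ i, ∑ k, (t i * t k * (t i - t k)^2 * (-1*(t i + t k) + t i * t k + t l)) := by
    apply Finset.sum_nonneg; intro i _
    apply Finset.sum_nonneg; intro k _
    have h1 := ht1 i; have h2 := ht1 k; have h3 := ht1 l
    have hf : (0:ℝ) ≤ -1*(t i + t k) + t i * t k + t l := by nlinarith
    exact mul_nonneg (mul_nonneg (mul_nonneg (by linarith) (by linarith)) (sq_nonneg _)) hf
  have hup : 0 ≤ ((∑ i, (t i)^2)*(∑ i, (t i)^4) - (∑ i, (t i)^3)^2) * (1 - (α + β * z l)) := by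
    linarith [hidU, hUnn, hDR]
  -- lower bound : -1 ≤ R
  have hidL := double_id t 1 (-(t l))
  have hmono : (∑ i, ∑ k, (t i * t k * (t i - t k)^2 * (1*(t i + t k) + t i * t k + -(t i₀))))
      ≤ ∑ i, ∑ k, (t i * t k * (t i - t k)^2 * (1*(t i + t k) + t i * t k + -(t l))) := by
    apply Finset.sum_le_sum; intro i _
    apply Finset.sum_le_sum; intro k _
    have hq : (0:ℝ) ≤ t i * t k * (t i - t k)^2 :=
      mul_nonneg (mul_nonneg (by linarith [ht1 i]) (by linarith [ht1 k])) (sq_nonneg _)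
    linarith [mul_nonneg hq (sub_nonneg.mpr htl)]
  have hlow : 0 ≤ ((∑ i, (t i)^2)*(∑ i, (t i)^4) - (∑ i, (t i)^3)^2) * (1 + (α + β * z l)) := by
    linarith [hidL, hmono, hML, hDR]
  rw [abs_le]
  constructor
  · by_contra hcon
    push_neg at hcon
    linarith [mul_pos hD (by linarith : (0:ℝ) < -1 - (α + β * z l)), hlow]
  · by_contra hcon
    push_neg at hcon
    linarith [mul_pos hD (by linarith : (0:ℝ) < (α + β * z l) - 1), hup]
end

section
/- For n = 3, y₀ = (1, 1, η), z₁ = 0, z₂ = −1, and z₃ a real parameter with z₃ ∉ {0, −1}, the MRE stability polynomial evaluated at z₃ equals R(z₃) = (2(z₃ + 2) − η²(z₃ − 1)(5z₃² + 8z₃ + 4)) / (η²(z₃ − 1)²(5z₃² + 8z₃ + 4) + 4), and the value at 0 equals R(0) = (η²((z₃ − 2)z₃(z₃ + 1)(3z₃ − 1) + 4) + 4) / (η²(z₃ − 1)²(5z₃² + 8z₃ + 4) + 4). -/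
lemma quad_coeff_zero (A B : ℝ) (h : ∀ t : ℝ, 0 ≤ A * t ^ 2 + B * t) : B = 0 := by
  by_contra hB
  have hA : (0:ℝ) < |A| + 1 := by positivity
  have hA2 : (0:ℝ) < (|A| + 1) ^ 2 := by positivity
  have h1 := h (-B / (|A| + 1))
  have heq : A * (-B / (|A| + 1)) ^ 2 + B * (-B / (|A| + 1))
      = (A * B ^ 2 - B ^ 2 * (|A| + 1)) / (|A| + 1) ^ 2 := by
    field_simp
    ring
  rw [heq] at h1
  have h2 : (0:ℝ) * (|A| + 1) ^ 2 ≤ A * B ^ 2 - B ^ 2 * (|A| + 1) := (le_div_iff₀ hA2).mp h1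
  have hB2 : 0 < B ^ 2 := by positivity
  have hle : A * B ^ 2 ≤ |A| * B ^ 2 :=
    mul_le_mul_of_nonneg_right (le_abs_self A) (sq_nonneg B)
  nlinarith [h2, hle, hB2]

/-- Example: for `n = 3`, `y₀ = (1, 1, η)`, `z₁ = 0`, `z₂ = −1` and a
parameter `z₃ ∉ {0, −1}`, the 2-norm MRE stability polynomial `R(z) = α + βz`
satisfies the stated closed-form expressions for `R(z₃)` and `R(0)`. -/
theorem mre_example_formulas (η z₃ : ℝ) (h0 : z₃ ≠ 0) (h1 : z₃ ≠ -1)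
    (α β : ℝ)
    (hmin : ∀ a b : ℝ,
      ((1 + ((0 : ℝ) - 1) * (α + β * 0)) ^ 2 +
       (1 + ((-1 : ℝ) - 1) * (α + β * (-1))) ^ 2 +
       η ^ 2 * (1 + (z₃ - 1) * (α + β * z₃)) ^ 2) ≤
      ((1 + ((0 : ℝ) - 1) * (a + b * 0)) ^ 2 +
       (1 + ((-1 : ℝ) - 1) * (a + b * (-1))) ^ 2 +
       η ^ 2 * (1 + (z₃ - 1) * (a + b * z₃)) ^ 2)) :
    α + β * z₃ =
      (2 * (z₃ + 2) - η ^ 2 * (z₃ - 1) * (5 * z₃ ^ 2 + 8 * z₃ + 4)) /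
        (η ^ 2 * (z₃ - 1) ^ 2 * (5 * z₃ ^ 2 + 8 * z₃ + 4) + 4) ∧
    α = (η ^ 2 * ((z₃ - 2) * z₃ * (z₃ + 1) * (3 * z₃ - 1) + 4) + 4) /
        (η ^ 2 * (z₃ - 1) ^ 2 * (5 * z₃ ^ 2 + 8 * z₃ + 4) + 4) := by
  set c : ℝ := η ^ 2 * (z₃ - 1) with hc
  -- first normal equation (direction (1,0))
  have hE1 : 2 * ((5 + c * (z₃ - 1)) * α + (-4 + c * (z₃ - 1) * z₃) * β + (c - 3)) = 0 := by
    apply quad_coeff_zero (1 + 4 + η ^ 2 * (z₃ - 1) ^ 2)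
    intro t
    have h := hmin (α + t) β
    have heq : ((1 + ((0:ℝ) - 1) * (α + t + β * 0)) ^ 2 + (1 + ((-1:ℝ) - 1) * (α + t + β * (-1))) ^ 2 +
        η ^ 2 * (1 + (z₃ - 1) * (α + t + β * z₃)) ^ 2) -
        ((1 + ((0:ℝ) - 1) * (α + β * 0)) ^ 2 + (1 + ((-1:ℝ) - 1) * (α + β * (-1))) ^ 2 +
        η ^ 2 * (1 + (z₃ - 1) * (α + β * z₃)) ^ 2)
        = (1 + 4 + η ^ 2 * (z₃ - 1) ^ 2) * t ^ 2 +
          2 * ((5 + c * (z₃ - 1)) * α + (-4 + c * (z₃ - 1) * z₃) * β + (c - 3)) * t := by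
      rw [hc]; ring
    linarith [h, heq.ge, heq.le]
  -- second normal equation (direction (0,1))
  have hE2 : 2 * ((-4 + c * z₃ * (z₃ - 1)) * α + (4 + c * z₃ ^ 2 * (z₃ - 1)) * β + (2 + c * z₃)) = 0 := by
    apply quad_coeff_zero (4 + η ^ 2 * (z₃ - 1) ^ 2 * z₃ ^ 2)
    intro t
    have h := hmin α (β + t)
    have heq : ((1 + ((0:ℝ) - 1) * (α + (β + t) * 0)) ^ 2 + (1 + ((-1:ℝ) - 1) * (α + (β + t) * (-1))) ^ 2 +
        η ^ 2 * (1 + (z₃ - 1) * (α + (β + t) * z₃)) ^ 2) -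
        ((1 + ((0:ℝ) - 1) * (α + β * 0)) ^ 2 + (1 + ((-1:ℝ) - 1) * (α + β * (-1))) ^ 2 +
        η ^ 2 * (1 + (z₃ - 1) * (α + β * z₃)) ^ 2)
        = (4 + η ^ 2 * (z₃ - 1) ^ 2 * z₃ ^ 2) * t ^ 2 +
          2 * ((-4 + c * z₃ * (z₃ - 1)) * α + (4 + c * z₃ ^ 2 * (z₃ - 1)) * β + (2 + c * z₃)) * t := by
      rw [hc]; ring
    linarith [h, heq.ge, heq.le]
  have hq : (0:ℝ) < 5 * z₃ ^ 2 + 8 * z₃ + 4 := by nlinarith [sq_nonneg (z₃ + 4/5)]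
  have hD : η ^ 2 * (z₃ - 1) ^ 2 * (5 * z₃ ^ 2 + 8 * z₃ + 4) + 4 ≠ 0 := by positivity
  constructor
  · rw [eq_div_iff hD]
    linear_combination ((4 + 4 * z₃) / 2) * hE1 + ((4 + 5 * z₃) / 2) * hE2
  · rw [eq_div_iff hD]
    linear_combination ((4 + c * z₃ ^ 2 * (z₃ - 1)) / 2) * hE1 + ((4 - c * z₃ * (z₃ - 1)) / 2) * hE2
end

section
/- Zero-stability inheritance: consider the MRMS(k, p) method with p ≤ k applied to y' = 0 with uniform step. For any minimizing coefficient vector α, the resulting value y_k equals −c_k^{−1}∑_{j=0}^{k−1} c_j y_j (where c_j = 0 for j < k − p and c_{k−p},…,c_k are the BDF-p coefficients); hence the recurrence produced by the method has generating polynomial ρ(ζ) = c_k^{−1} ζ^{k−p} ρ^{BDF}(ζ), so all roots of ρ lie in the closed unit disk with simple roots on the boundary (zero-stability) whenever the underlying BDF formula of p steps is zero-stable. -/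
open Finset Polynomial in
/-- Zero-stability inheritance for MRMS(k, p), `p ≤ k`, applied to `y' = 0`
with uniform step. With BDF coefficients `c` (padded by zeros: `c j = 0` for
`j < k − p`, `c k ≠ 0`): (a) the minimal residual `0` is attained; (b) every
minimizing coefficient vector `α` produces the same value
`y_k = −c_k⁻¹ ∑_{j<k} c j • y j`; (c) the generating polynomial
`ρ(ζ) = ζᵏ + ∑_{j<k} (c j / c k) ζʲ` of the resulting recurrence equals
`c_k⁻¹ ζ^(k−p) ρ^BDF(ζ)` and, whenever the underlying BDF formula is
zero-stable (all complex roots in the closed unit disk, with roots on the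
unit circle simple), `ρ` is zero-stable as well. -/
theorem mrms_zero_stability (k p : ℕ) (hp : 0 < p) (hpk : p ≤ k)
    (c : ℕ → ℝ) (hc0 : ∀ j < k - p, c j = 0) (hck : c k ≠ 0)
    (E : Type*) [NormedAddCommGroup E] [NormedSpace ℝ E]
    (y : Fin k → E) :
    -- (a) the minimum value 0 of the residual norm is attained
    (∃ α : Fin k → ℝ, ∑ j : Fin k, (c (j : ℕ) - c k * α j) • y j = 0) ∧
    -- (b) every minimizer yields the BDF-type linear recurrence for `y_k`
    (∀ α : Fin k → ℝ,
      (∀ α' : Fin k → ℝ,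
        ‖∑ j : Fin k, (c (j : ℕ) - c k * α j) • y j‖ ≤ ‖∑ j : Fin k, (c (j : ℕ) - c k * α' j) • y j‖) →
      -∑ j : Fin k, α j • y j = -(c k)⁻¹ • ∑ j : Fin k, c (j : ℕ) • y j) ∧
    -- (c) the generating polynomial of the resulting recurrence
    ((X ^ k + ∑ j ∈ range k, C (c j / c k) * X ^ j : Polynomial ℝ) =
        C (c k)⁻¹ * X ^ (k - p) * ∑ j ∈ range (p + 1), C (c (k - p + j)) * X ^ j) ∧
    -- zero-stability is inherited from the BDF generating polynomial
    ((∀ ζ : ℂ, ((∑ j ∈ range (p + 1), C (c (k - p + j)) * X ^ j :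
          Polynomial ℝ).map (algebraMap ℝ ℂ)).IsRoot ζ →
        ‖ζ‖ ≤ 1 ∧ (‖ζ‖ = 1 →
          ((∑ j ∈ range (p + 1), C (c (k - p + j)) * X ^ j :
            Polynomial ℝ).map (algebraMap ℝ ℂ)).rootMultiplicity ζ = 1)) →
      ∀ ζ : ℂ, ((X ^ k + ∑ j ∈ range k, C (c j / c k) * X ^ j :
          Polynomial ℝ).map (algebraMap ℝ ℂ)).IsRoot ζ →
        ‖ζ‖ ≤ 1 ∧ (‖ζ‖ = 1 →
          ((X ^ k + ∑ j ∈ range k, C (c j / c k) * X ^ j :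
            Polynomial ℝ).map (algebraMap ℝ ℂ)).rootMultiplicity ζ = 1)) := by
  -- part (c) as a standalone identity
  have hpoly : (X ^ k + ∑ j ∈ range k, C (c j / c k) * X ^ j : Polynomial ℝ) =
      C (c k)⁻¹ * X ^ (k - p) * ∑ j ∈ range (p + 1), C (c (k - p + j)) * X ^ j := by
    have hL : (X ^ k + ∑ j ∈ range k, C (c j / c k) * X ^ j : Polynomial ℝ)
        = ∑ j ∈ range (k + 1), C (c j / c k) * X ^ j := by
      rw [Finset.sum_range_succ, div_self hck, map_one, one_mul, add_comm]
    have hR : (C (c k)⁻¹ * X ^ (k - p) * ∑ j ∈ range (p + 1), C (c (k - p + j)) * X ^ j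
        : Polynomial ℝ) = ∑ j ∈ range (p + 1), C (c (k - p + j) / c k) * X ^ (k - p + j) := by
      rw [Finset.mul_sum]
      refine Finset.sum_congr rfl fun j _ => ?_
      rw [div_eq_mul_inv, map_mul, pow_add]
      ring
    rw [hL, hR]
    have hIco : ∑ j ∈ range (p + 1), C (c (k - p + j) / c k) * X ^ (k - p + j)
        = ∑ j ∈ Finset.Ico (k - p) (k + 1), (C (c j / c k) * X ^ j : Polynomial ℝ) := by
      rw [Finset.sum_Ico_eq_sum_range]
      have : k + 1 - (k - p) = p + 1 := by omega
      rw [this]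
    rw [hIco]
    rw [Finset.range_eq_Ico]
    refine (Finset.sum_subset (Finset.Ico_subset_Ico (Nat.zero_le _) le_rfl) ?_).symm
    intro x hx hx'
    simp only [Finset.mem_Ico, not_and, not_le] at hx hx'
    have : c x = 0 := hc0 x (by omega)
    simp [this]
  -- the optimal coefficients
  have hopt : ∑ j : Fin k, (c (j : ℕ) - c k * (c (j : ℕ) / c k)) • y j = 0 := by
    have : ∀ j : Fin k, c (j : ℕ) - c k * (c (j : ℕ) / c k) = 0 := by
      intro j; field_simp; ring
    simp [this]
  refine ⟨⟨fun j => c (j : ℕ) / c k, hopt⟩, ?_, ?_, ?_⟩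
  · -- (b)
    intro α hmin
    have h0 : ∑ j : Fin k, (c (j : ℕ) - c k * α j) • y j = 0 := by
      have := hmin (fun j => c (j : ℕ) / c k)
      rw [hopt, norm_zero] at this
      exact norm_le_zero_iff.mp this
    have h1 : ∑ j : Fin k, c (j : ℕ) • y j = c k • ∑ j : Fin k, α j • y j := by
      have := h0
      simp only [sub_smul, Finset.sum_sub_distrib, sub_eq_zero, mul_smul] at this
      rw [this, Finset.smul_sum]
    rw [h1, smul_smul, neg_mul, inv_mul_cancel₀ hck, neg_one_smul]
  · exact hpoly
  · -- (d)
    intro hBDF ζ hζ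
    set Q : Polynomial ℝ := ∑ j ∈ range (p + 1), C (c (k - p + j)) * X ^ j with hQ
    set P : Polynomial ℝ := X ^ k + ∑ j ∈ range k, C (c j / c k) * X ^ j with hP
    have hPne : P ≠ 0 := by
      intro h
      have := congrArg (fun q => Polynomial.coeff q k) h
      simp only [hP, Polynomial.coeff_add, Polynomial.coeff_X_pow, if_pos rfl,
        Polynomial.finset_sum_coeff, Polynomial.coeff_C_mul, Polynomial.coeff_zero] at this
      rw [Finset.sum_eq_zero (fun j hj => by
        rw [if_neg (Finset.mem_range.mp hj).ne', mul_zero])] at this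
      norm_num at this
    have hw : (algebraMap ℝ ℂ) (c k) ≠ 0 := by
      simpa using hck
    have hmap : P.map (algebraMap ℝ ℂ)
        = C ((algebraMap ℝ ℂ) (c k))⁻¹ * X ^ (k - p) * Q.map (algebraMap ℝ ℂ) := by
      rw [hpoly]
      simp [Polynomial.map_mul, Polynomial.map_pow, map_inv₀]
    have hPmne : P.map (algebraMap ℝ ℂ) ≠ 0 :=
      (Polynomial.map_ne_zero_iff (algebraMap ℝ ℂ).injective).mpr hPne
    by_cases hroot : ((Q.map (algebraMap ℝ ℂ)).IsRoot ζ)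
    · obtain ⟨h1, h2⟩ := hBDF ζ hroot
      refine ⟨h1, fun habs => ?_⟩
      have hζ0 : ζ ≠ 0 := by
        intro h; rw [h] at habs; simp at habs
      rw [hmap]
      rw [Polynomial.rootMultiplicity_mul (hmap ▸ hPmne),
        Polynomial.rootMultiplicity_mul
          (mul_ne_zero (by simpa using hck) (pow_ne_zero _ Polynomial.X_ne_zero))]
      have hCm : Polynomial.rootMultiplicity ζ (C ((algebraMap ℝ ℂ) (c k))⁻¹) = 0 :=
        Polynomial.rootMultiplicity_eq_zero (by simp [Polynomial.IsRoot, hck])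
      have hXm : Polynomial.rootMultiplicity ζ ((X : Polynomial ℂ) ^ (k - p)) = 0 :=
        Polynomial.rootMultiplicity_eq_zero (by simp [Polynomial.IsRoot, pow_eq_zero_iff', hζ0])
      rw [hCm, hXm, h2 habs]
    · have hζ0 : ζ = 0 := by
        have heval := hζ
        rw [hmap] at heval
        simp only [Polynomial.IsRoot, Polynomial.eval_mul, Polynomial.eval_C,
          Polynomial.eval_pow, Polynomial.eval_X, mul_eq_zero, inv_eq_zero] at heval
        rcases heval with (h | h) | h
        · exact absurd h hw
        · exact (pow_eq_zero_iff'.mp h).1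
        · exact absurd h hroot
      subst hζ0
      refine ⟨by simp, fun habs => ?_⟩
      simp at habs
end
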